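/- arXiv:2207.08031 — 11 statements merged into one kernel-verified Lean document; each statement's English description precedes it below -/
import Mathlib

section
/- Let q be a prime, m ≥ 1, and w : ZMod q → ℕ a map satisfying w(α) = 0 if and only if α = 0 and {w(α) : α ∈ ZMod q, α ≠ 0} = {1, 2, …, m}. Let C be a k-dimensional ZMod q-subspace of (Fin n → ZMod q) such that no coordinate is identically zero (for each i there exists c ∈ C with c i ≠ 0) and whose weight set W(C) equals {1, 2, …, n·m}. Then for every basis v₁, …, v_k of C, writing T = ⋃_{i=2}^{k} supp(v_i) and S' = supp(v₁) \ T, one has |S'| ≤ m·|T| + 1. -/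
/-!
If `|S'| ≥ m|T| + 2`, then `m|T| + 1 ≤ n ≤ nm` is the weight of some `c ∈ C`. Off `T` the vector
`c` is a multiple of `v₁`, so either `supp c ⊆ T`, giving weight at most `m|T|`, or `c` is nonzero
on all of `S'`, giving weight at least `|S'|`; both contradict the choice of the weight.
-/

/-- The weight of a vector with respect to a coordinate-wise weight function. -/
def wtVec {q n : ℕ} (w : ZMod q → ℕ) (c : Fin n → ZMod q) : ℕ := ∑ i, w (c i)

/-- The weight set of a set of vectors. -/
def wtSet {q n : ℕ} (w : ZMod q → ℕ) (C : Set (Fin n → ZMod q)) : Set ℕ :=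
  {x | ∃ c ∈ C, c ≠ 0 ∧ wtVec w c = x}

section Coordinates

variable {R ι κ : Type*} [CommSemiring R] [Fintype κ] {C : Submodule R (ι → R)}

lemma Module.Basis.coe_apply_eq_repr_mul_of_forall_ne (v : Module.Basis κ R C) (c : C)
    {i₀ : κ} {j : ι} (hj : ∀ i ≠ i₀, (v i : ι → R) j = 0) :
    (c : ι → R) j = v.repr c i₀ * (v i₀ : ι → R) j := by
  classical
  conv_lhs => rw [← v.sum_repr c]
  simp only [Submodule.coe_sum, Submodule.coe_smul, Finset.sum_apply, Pi.smul_apply, smul_eq_mul]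
  exact Finset.sum_eq_single i₀ (fun i _ hi => by rw [hj i hi, mul_zero])
    (fun h => absurd (Finset.mem_univ i₀) h)

lemma Module.Basis.support_subset_or_support_diff_subset [NoZeroDivisors R]
    (v : Module.Basis κ R C) (c : C) (i₀ : κ) :
    Function.support (c : ι → R) ⊆ ⋃ i ∈ {i | i ≠ i₀}, Function.support (v i : ι → R) ∨
      Function.support (v i₀ : ι → R) \ ⋃ i ∈ {i | i ≠ i₀}, Function.support (v i : ι → R) ⊆
        Function.support (c : ι → R) := by
  have hcoord : ∀ j ∉ ⋃ i ∈ {i | i ≠ i₀}, Function.support (v i : ι → R),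
      (c : ι → R) j = v.repr c i₀ * (v i₀ : ι → R) j := fun j hj =>
    v.coe_apply_eq_repr_mul_of_forall_ne c fun i hi => by
      simpa using fun h => hj (Set.mem_biUnion hi h)
  by_cases h₀ : v.repr c i₀ = 0
  · left
    intro j hj
    by_contra hjT
    exact hj (by rw [hcoord j hjT, h₀, zero_mul])
  · right
    rintro j ⟨hj, hjT⟩
    rw [Function.mem_support, hcoord j hjT]
    exact mul_ne_zero h₀ hj

end Coordinates

section Weight

variable {q n : ℕ} {w : ZMod q → ℕ} {c : Fin n → ZMod q}

lemma wtVec_le_mul_ncard {m : ℕ} (hw0 : w 0 = 0) (hwle : ∀ α, w α ≤ m) {T : Set (Fin n)}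
    (hc : Function.support c ⊆ T) : wtVec w c ≤ m * T.ncard := by
  classical
  calc wtVec w c = ∑ j ∈ T.toFinset, w (c j) := by
        refine (Finset.sum_subset (Finset.subset_univ _) fun j _ hj => ?_).symm
        rw [show c j = 0 by simpa using mt (@hc j) (by simpa using hj), hw0]
    _ ≤ T.toFinset.card • m := Finset.sum_le_card_nsmul _ _ _ fun j _ => hwle _
    _ = m * T.ncard := by rw [Set.ncard_eq_toFinset_card', smul_eq_mul, mul_comm]

lemma ncard_le_wtVec (hw0 : ∀ α, w α = 0 → α = 0) {S : Set (Fin n)}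
    (hc : S ⊆ Function.support c) : S.ncard ≤ wtVec w c := by
  classical
  calc S.ncard = ∑ _j ∈ S.toFinset, 1 := by simp [Set.ncard_eq_toFinset_card']
    _ ≤ ∑ j ∈ S.toFinset, w (c j) := Finset.sum_le_sum fun j hj =>
        Nat.one_le_iff_ne_zero.2 fun h => hc (by simpa using hj) (hw0 _ h)
    _ ≤ wtVec w c := Finset.sum_le_sum_of_subset (Finset.subset_univ _)

end Weight

theorem stmt0_general (q m n k : ℕ) (hq : q.Prime) (hm : 1 ≤ m) (hk : 0 < k)
    (w : ZMod q → ℕ) (hw0 : ∀ α : ZMod q, w α = 0 ↔ α = 0)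
    (hwrange : {x | ∃ α : ZMod q, α ≠ 0 ∧ w α = x} = Set.Icc 1 m)
    (C : Submodule (ZMod q) (Fin n → ZMod q))
    (hFWS : wtSet w (C : Set (Fin n → ZMod q)) = Set.Icc 1 (n * m))
    (v : Module.Basis (Fin k) (ZMod q) C)
    (T S' : Set (Fin n))
    (hT : T = ⋃ i ∈ {i : Fin k | i ≠ ⟨0, hk⟩}, Function.support ((v i : C) : Fin n → ZMod q))
    (hS' : S' = Function.support ((v ⟨0, hk⟩ : C) : Fin n → ZMod q) \ T) :
    S'.ncard ≤ m * T.ncard + 1 := by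
  have := Fact.mk hq
  have hwle : ∀ α, w α ≤ m := fun α => by
    by_cases hα : α = 0
    · simp [(hw0 α).2 hα]
    · exact (show w α ∈ Set.Icc 1 m from hwrange ▸ ⟨α, hα, rfl⟩).2
  by_contra! hcon
  have hcard : S'.ncard + T.ncard ≤ n := by
    rw [hS', Set.ncard_sdiff_add_ncard]
    simpa using Set.ncard_le_card (_ ∪ T)
  obtain ⟨c, hcC, -, hcw⟩ : m * T.ncard + 1 ∈ wtSet w (C : Set (Fin n → ZMod q)) := by
    rw [hFWS]
    exact ⟨by omega, by nlinarith⟩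
  subst hT hS'
  rcases v.support_subset_or_support_diff_subset ⟨c, hcC⟩ ⟨0, hk⟩ with h | h
  · have : wtVec w c ≤ _ := wtVec_le_mul_ncard ((hw0 0).2 rfl) hwle h
    omega
  · have : _ ≤ wtVec w c := ncard_le_wtVec (fun α => (hw0 α).1) h
    omega

theorem stmt0 (q m n k : ℕ) (hq : q.Prime) (hm : 1 ≤ m) (hk : 0 < k)
    (w : ZMod q → ℕ) (hw0 : ∀ α : ZMod q, w α = 0 ↔ α = 0)
    (hwrange : {x | ∃ α : ZMod q, α ≠ 0 ∧ w α = x} = Set.Icc 1 m)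
    (C : Submodule (ZMod q) (Fin n → ZMod q))
    (hdim : Module.finrank (ZMod q) C = k)
    (hnz : ∀ i : Fin n, ∃ c ∈ C, c i ≠ 0)
    (hFWS : wtSet w (C : Set (Fin n → ZMod q)) = Set.Icc 1 (n * m))
    (v : Module.Basis (Fin k) (ZMod q) C)
    (T S' : Set (Fin n))
    (hT : T = ⋃ i ∈ {i : Fin k | i ≠ ⟨0, hk⟩}, Function.support ((v i : C) : Fin n → ZMod q))
    (hS' : S' = Function.support ((v ⟨0, hk⟩ : C) : Fin n → ZMod q) \ T) :
    S'.ncard ≤ m * T.ncard + 1 :=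
  stmt0_general q m n k hq hm hk w hw0 hwrange C hFWS v T S' hT hS'
end

section
/- Let q be a prime, m ≥ 1, and w : ZMod q → ℕ a map satisfying w(α) = 0 if and only if α = 0 and {w(α) : α ∈ ZMod q, α ≠ 0} = {1, 2, …, m}. If C is a k-dimensional ZMod q-subspace of (Fin n → ZMod q) such that no coordinate is identically zero and whose weight set W(C) equals {1, 2, …, n·m}, then n·m ≤ (m+1)^k − 1, i.e., n ≤ Σ_{i=0}^{k−1} (m+1)^i. -/
private lemma geom_aux (m : ℕ) : ∀ k : ℕ, m * ∑ i ∈ Finset.range k, (m+1)^i + 1 = (m+1)^k := by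
  intro k
  induction k with
  | zero => simp
  | succ k ih =>
    rw [Finset.sum_range_succ, mul_add, pow_succ]
    nlinarith [ih]

/-- support of a vector as a Finset -/
private def supp {q n : ℕ} (c : Fin n → ZMod q) : Finset (Fin n) :=
  Finset.univ.filter (fun i => c i ≠ 0)

private lemma card_supp_le {q n : ℕ} (w : ZMod q → ℕ)
    (hwpos : ∀ α : ZMod q, α ≠ 0 → 1 ≤ w α) (c : Fin n → ZMod q) :
    (supp c).card ≤ wtVec w c := by
  classical
  calc (supp c).card = ∑ i ∈ supp c, 1 := by simp
  _ ≤ ∑ i ∈ supp c, w (c i) := by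
      apply Finset.sum_le_sum
      intro i hi
      exact hwpos _ (by simpa [supp] using hi)
  _ ≤ ∑ i, w (c i) := Finset.sum_le_sum_of_subset (Finset.subset_univ _)
  _ = wtVec w c := rfl

private lemma wt_le_card_supp {q n m : ℕ} (w : ZMod q → ℕ)
    (hw0 : w 0 = 0) (hwle : ∀ α : ZMod q, w α ≤ m) (c : Fin n → ZMod q) :
    wtVec w c ≤ m * (supp c).card := by
  classical
  have : wtVec w c = ∑ i ∈ supp c, w (c i) := by
    rw [wtVec]
    apply (Finset.sum_subset (Finset.subset_univ _) _).symm
    intro i _ hi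
    have : c i = 0 := by simpa [supp] using hi
    simp [this, hw0]
  rw [this]
  calc ∑ i ∈ supp c, w (c i) ≤ ∑ i ∈ supp c, m := Finset.sum_le_sum (fun i _ => hwle _)
  _ = (supp c).card * m := by simp [Finset.sum_const, Nat.smul_one_eq_cast]
  _ = m * (supp c).card := Nat.mul_comm _ _

theorem stmt1 (q m n k : ℕ) (hq : q.Prime) (hm : 1 ≤ m)
    (w : ZMod q → ℕ) (hw0 : ∀ α : ZMod q, w α = 0 ↔ α = 0)
    (hwrange : {x | ∃ α : ZMod q, α ≠ 0 ∧ w α = x} = Set.Icc 1 m)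
    (C : Submodule (ZMod q) (Fin n → ZMod q))
    (hdim : Module.finrank (ZMod q) C = k)
    (hnz : ∀ i : Fin n, ∃ c ∈ C, c i ≠ 0)
    (hFWS : wtSet w (C : Set (Fin n → ZMod q)) = Set.Icc 1 (n * m)) :
    n * m ≤ (m + 1) ^ k - 1 ∧ n ≤ ∑ i ∈ Finset.range k, (m + 1) ^ i := by
  classical
  haveI := Fact.mk hq
  have hwle : ∀ α : ZMod q, w α ≤ m := by
    intro α
    by_cases hα : α = 0
    · rw [hα, (hw0 0).mpr rfl]; omega
    · have : w α ∈ Set.Icc 1 m := by rw [← hwrange]; exact ⟨α, hα, rfl⟩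
      exact this.2
  have hwpos : ∀ α : ZMod q, α ≠ 0 → 1 ≤ w α := fun α hα =>
    Nat.one_le_iff_ne_zero.mpr (fun h => hα ((hw0 α).mp h))
  have main : n * m ≤ (m + 1) ^ k - 1 := by
    by_contra hcon
    push_neg at hcon
    have hpow1 : 1 ≤ (m+1)^k := Nat.one_le_pow _ _ (by omega)
    have hpowle : (m+1)^k ≤ n * m := by omega
    -- choose codewords of weight (m+1)^j for j : Fin (k+1)
    have hc : ∀ j : Fin (k+1), ∃ c, c ∈ C ∧ c ≠ 0 ∧ wtVec w c = (m+1)^(j : ℕ) := by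
      intro j
      have hmem : (m+1)^(j : ℕ) ∈ Set.Icc 1 (n * m) := by
        constructor
        · exact Nat.one_le_pow _ _ (by omega)
        · exact le_trans (Nat.pow_le_pow_right (by omega) (by omega)) hpowle
      rw [← hFWS] at hmem
      obtain ⟨c, hcC, hcne, hcw⟩ := hmem
      exact ⟨c, hcC, hcne, hcw⟩
    choose f hfC hfne hfw using hc
    -- the k+1 vectors are linearly dependent
    have hdep : ¬ LinearIndependent (ZMod q) (fun j : Fin (k+1) => (⟨f j, hfC j⟩ : C)) := by
      intro hli
      have := hli.fintype_card_le_finrank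
      rw [hdim] at this
      simp at this
    rw [Fintype.not_linearIndependent_iff] at hdep
    obtain ⟨g, hgsum, j0, hj0⟩ := hdep
    -- push to ambient space
    have hgsum' : ∑ j : Fin (k+1), g j • f j = 0 := by
      have := congrArg (Subtype.val : C → (Fin n → ZMod q)) hgsum
      simpa using this
    set T : Finset (Fin (k+1)) := Finset.univ.filter (fun j => g j ≠ 0) with hT
    have hj0T : j0 ∈ T := by simp [hT, hj0]
    have hTne : T.Nonempty := ⟨j0, hj0T⟩
    set jm := T.max' hTne with hjm
    have hjmT : jm ∈ T := T.max'_mem hTne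
    have hgjm : g jm ≠ 0 := by simpa [hT] using hjmT
    have hsumT : ∑ j ∈ T, g j • f j = 0 := by
      rw [← hgsum']
      apply Finset.sum_subset (Finset.subset_univ _)
      intro j _ hj
      have : g j = 0 := by simpa [hT] using hj
      simp [this]
    have hkey : g jm • f jm + ∑ j ∈ T.erase jm, g j • f j = 0 := by
      rw [← hsumT]
      exact Finset.add_sum_erase T (fun j => g j • f j) hjmT
    -- support inclusion
    have hsupp : supp (f jm) ⊆ (T.erase jm).biUnion (fun j => supp (f j)) := by
      intro i hi
      have hfi : f jm i ≠ 0 := by simpa [supp] using hi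
      have heval : g jm * f jm i + ∑ j ∈ T.erase jm, g j * f j i = 0 := by
        have := congrFun hkey i
        simpa [Finset.sum_apply] using this
      have hne : ∑ j ∈ T.erase jm, g j * f j i ≠ 0 := by
        intro h
        rw [h, add_zero] at heval
        exact (mul_ne_zero hgjm hfi) heval
      obtain ⟨j, hjmem, hjne⟩ : ∃ j ∈ T.erase jm, g j * f j i ≠ 0 := by
        by_contra hall
        push_neg at hall
        exact hne (Finset.sum_eq_zero hall)
      have : f j i ≠ 0 := fun h => hjne (by simp [h])
      simp only [Finset.mem_biUnion]
      exact ⟨j, hjmem, by simpa [supp] using this⟩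
    -- weight chain
    have h1 : (m+1)^(jm : ℕ) ≤ m * ((T.erase jm).biUnion (fun j => supp (f j))).card := by
      rw [← hfw jm]
      calc wtVec w (f jm) ≤ m * (supp (f jm)).card :=
            wt_le_card_supp w ((hw0 0).mpr rfl) hwle _
      _ ≤ m * ((T.erase jm).biUnion (fun j => supp (f j))).card :=
            Nat.mul_le_mul_left m (Finset.card_le_card hsupp)
    have h2 : ((T.erase jm).biUnion (fun j => supp (f j))).card
        ≤ ∑ j ∈ T.erase jm, (m+1)^(j : ℕ) := by
      calc ((T.erase jm).biUnion (fun j => supp (f j))).card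
          ≤ ∑ j ∈ T.erase jm, (supp (f j)).card := Finset.card_biUnion_le
      _ ≤ ∑ j ∈ T.erase jm, (m+1)^(j : ℕ) := by
          apply Finset.sum_le_sum
          intro j _
          rw [← hfw j]
          exact card_supp_le w hwpos _
    have h3 : ∑ j ∈ T.erase jm, (m+1)^(j : ℕ) ≤ ∑ i ∈ Finset.range (jm : ℕ), (m+1)^i := by
      have himg : ∑ i ∈ (T.erase jm).image (fun j : Fin (k+1) => (j : ℕ)), (m+1)^i
          = ∑ j ∈ T.erase jm, (m+1)^(j : ℕ) :=
        Finset.sum_image (fun a _ b _ h => Fin.val_injective h)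
      rw [← himg]
      apply Finset.sum_le_sum_of_subset
      intro i hi
      simp only [Finset.mem_image] at hi
      obtain ⟨j, hjmem, rfl⟩ := hi
      have hjT : j ∈ T := Finset.mem_of_mem_erase hjmem
      have hjne : j ≠ jm := Finset.ne_of_mem_erase hjmem
      have : j ≤ jm := Finset.le_max' T j hjT
      have : (j : ℕ) < (jm : ℕ) := by
        rcases lt_or_eq_of_le this with h | h
        · exact h
        · exact absurd h hjne
      simpa [Finset.mem_range]
    have hgeom := geom_aux m (jm : ℕ)
    have hfinal : (m+1)^(jm : ℕ) ≤ m * ∑ i ∈ Finset.range (jm : ℕ), (m+1)^i :=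
      le_trans h1 (le_trans (Nat.mul_le_mul_left m h2) (Nat.mul_le_mul_left m h3))
    omega
  refine ⟨main, ?_⟩
  have hgeom := geom_aux m k
  have : n * m ≤ m * ∑ i ∈ Finset.range k, (m + 1) ^ i := by omega
  rw [Nat.mul_comm n m] at this
  exact Nat.le_of_mul_le_mul_left this (by omega)
end

section
/- Let q be a prime, m ≥ 1, and w : ZMod q → ℕ a map satisfying w(α) = 0 if and only if α = 0 and {w(α) : α ∈ ZMod q, α ≠ 0} = {1, 2, …, m}. For every k ≥ 1 and every n with k ≤ n ≤ Σ_{i=0}^{k−1} (m+1)^i, there exists a k-dimensional ZMod q-subspace C of (Fin n → ZMod q) whose weight set W(C) equals {1, 2, …, n·m}. -/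
/-!
Induct on the dimension. Given an FWS code `C'` of length `n'` and `1 ≤ t ≤ n' m + 1`, the code
`{(u, c, …, c) : u ∈ C', c ∈ 𝔽_q}` of length `n' + t` has one more dimension, and its weights are
the numbers `y + t j` with `0 ≤ y ≤ n' m` and `0 ≤ j ≤ m`, which are exactly `0, …, (n' + t) m`.
Starting from the zero code of length `0`, taking `t` as large as allowed at each step reaches every
length up to `S_k = ∑_{i<k} (m+1)^i`, because `m S_k + 1 = (m+1)^k = S_{k+1} - S_k`.
-/

open Module

theorem Nat.exists_add_mul_eq_of_le {N t m x : ℕ} (ht : t ≤ N + 1) (hx : x ≤ N + t * m) :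
    ∃ y ≤ N, ∃ j ≤ m, y + t * j = x := by
  rcases Nat.eq_zero_or_pos t with rfl | ht0
  · exact ⟨x, by simpa using hx, 0, m.zero_le, by simp⟩
  rcases le_or_gt (x / t) m with hj | hj
  · have := Nat.mod_lt x ht0
    exact ⟨x % t, by omega, x / t, hj, Nat.mod_add_div x t⟩
  · have : t * m ≤ x := (Nat.mul_le_mul_left t hj.le).trans (Nat.mul_div_le x t)
    exact ⟨x - t * m, by omega, m, le_rfl, by omega⟩

theorem le_sum_range_pow_succ (m k : ℕ) : k ≤ ∑ i ∈ Finset.range k, (m + 1) ^ i := by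
  simpa using Finset.card_nsmul_le_sum (Finset.range k) _ 1 fun i _ => Nat.one_le_pow i _ m.succ_pos

section Extension

variable (R : Type*) [Semiring R] (n t : ℕ)

def appendConst : (Fin n → R) × R →ₗ[R] Fin (n + t) → R where
  toFun p := Fin.append p.1 fun _ => p.2
  map_add' p p' := by
    ext i
    refine Fin.addCases (fun j => ?_) (fun j => ?_) i <;> simp
  map_smul' a p := by
    ext i
    refine Fin.addCases (fun j => ?_) (fun j => ?_) i <;> simp

variable {R n t}

@[simp]
theorem appendConst_apply (p : (Fin n → R) × R) :
    appendConst R n t p = Fin.append p.1 fun _ => p.2 :=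
  rfl

theorem appendConst_injective (ht : 0 < t) : Function.Injective (appendConst R n t) := by
  intro p p' h
  ext i
  · simpa using congrFun h (Fin.castAdd t i)
  · have := congrFun h (Fin.natAdd n ⟨0, ht⟩)
    rwa [appendConst_apply, appendConst_apply, Fin.append_right, Fin.append_right] at this

variable (t) in
def Submodule.extendConst (C : Submodule R (Fin n → R)) : Submodule R (Fin (n + t) → R) :=
  LinearMap.range (appendConst R n t ∘ₗ C.subtype.prodMap LinearMap.id)

theorem Submodule.append_mem_extendConst {C : Submodule R (Fin n → R)} {u : Fin n → R}
    (hu : u ∈ C) (c : R) : (Fin.append u fun _ => c) ∈ C.extendConst t :=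
  ⟨(⟨u, hu⟩, c), rfl⟩

theorem Submodule.finrank_extendConst {K : Type*} [DivisionRing K] (C : Submodule K (Fin n → K))
    (ht : 0 < t) : finrank K (C.extendConst t) = finrank K C + 1 := by
  have hinj : Function.Injective (appendConst K n t ∘ₗ C.subtype.prodMap LinearMap.id) :=
    (appendConst_injective ht).comp
      (Prod.map_injective.2 ⟨C.injective_subtype, Function.injective_id⟩)
  rw [Submodule.extendConst, LinearMap.finrank_range_of_inj hinj, finrank_prod, finrank_self]

end Extension

section Weights

variable {q n : ℕ} {w : ZMod q → ℕ}

theorem wtVec_zero (hw : w 0 = 0) : wtVec w (0 : Fin n → ZMod q) = 0 := by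
  simp [wtVec, hw]

theorem wtVec_append_const {t : ℕ} (u : Fin n → ZMod q) (c : ZMod q) :
    wtVec w (Fin.append u fun _ : Fin t => c) = wtVec w u + t * w c := by
  simp [wtVec, Fin.sum_univ_add]

theorem wtVec_le {m : ℕ} (hw : ∀ α, w α ≤ m) (c : Fin n → ZMod q) : wtVec w c ≤ n * m := by
  simpa [wtVec] using Finset.sum_le_card_nsmul Finset.univ _ m fun i _ => hw (c i)

theorem wtVec_pos (hw0 : ∀ α, w α = 0 ↔ α = 0) {c : Fin n → ZMod q} (hc : c ≠ 0) :
    0 < wtVec w c := by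
  obtain ⟨i, hi⟩ := Function.ne_iff.1 hc
  calc 0 < w (c i) := Nat.pos_of_ne_zero fun h => hi ((hw0 _).1 h)
    _ ≤ wtVec w c :=
      Finset.single_le_sum (f := fun i => w (c i)) (fun _ _ => Nat.zero_le _) (Finset.mem_univ i)

theorem wtSet_subset_Icc {m : ℕ} (hw0 : ∀ α, w α = 0 ↔ α = 0) (hw : ∀ α, w α ≤ m)
    (C : Set (Fin n → ZMod q)) : wtSet w C ⊆ Set.Icc 1 (n * m) := by
  rintro _ ⟨c, -, hc, rfl⟩
  exact ⟨wtVec_pos hw0 hc, wtVec_le hw c⟩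

theorem exists_mem_wtVec_eq {C : Submodule (ZMod q) (Fin n → ZMod q)} {N y : ℕ} (hw : w 0 = 0)
    (hC : wtSet w (C : Set (Fin n → ZMod q)) = Set.Icc 1 N) (hy : y ≤ N) :
    ∃ c ∈ C, wtVec w c = y := by
  rcases Nat.eq_zero_or_pos y with rfl | hy0
  · exact ⟨0, C.zero_mem, wtVec_zero hw⟩
  · obtain ⟨c, hc, -, rfl⟩ : y ∈ wtSet w (C : Set (Fin n → ZMod q)) := hC ▸ ⟨hy0, hy⟩
    exact ⟨c, hc, rfl⟩

variable {m : ℕ} (hw0 : ∀ α : ZMod q, w α = 0 ↔ α = 0)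
  (hwrange : {x | ∃ α : ZMod q, α ≠ 0 ∧ w α = x} = Set.Icc 1 m)
include hw0 hwrange

theorem weight_le_of_range_eq_Icc (α : ZMod q) : w α ≤ m := by
  by_cases hα : α = 0
  · simp [hα, (hw0 0).2 rfl]
  · exact (hwrange.subset ⟨α, hα, rfl⟩).2

theorem exists_weight_eq_of_le {j : ℕ} (hj : j ≤ m) : ∃ α : ZMod q, w α = j := by
  rcases Nat.eq_zero_or_pos j with rfl | hj0
  · exact ⟨0, (hw0 0).2 rfl⟩
  · obtain ⟨α, -, hα⟩ : j ∈ {x | ∃ α : ZMod q, α ≠ 0 ∧ w α = x} := hwrange ▸ ⟨hj0, hj⟩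
    exact ⟨α, hα⟩

theorem wtSet_extendConst {t : ℕ} (ht : t ≤ n * m + 1) {C : Submodule (ZMod q) (Fin n → ZMod q)}
    (hC : wtSet w (C : Set (Fin n → ZMod q)) = Set.Icc 1 (n * m)) :
    wtSet w (C.extendConst t : Set (Fin (n + t) → ZMod q)) = Set.Icc 1 ((n + t) * m) := by
  refine (wtSet_subset_Icc hw0 (weight_le_of_range_eq_Icc hw0 hwrange) _).antisymm ?_
  rintro x ⟨hx1, hx⟩
  obtain ⟨y, hy, j, hj, rfl⟩ := Nat.exists_add_mul_eq_of_le ht (hx.trans_eq (add_mul n t m))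
  obtain ⟨u, hu, rfl⟩ := exists_mem_wtVec_eq ((hw0 0).2 rfl) hC hy
  obtain ⟨α, rfl⟩ := exists_weight_eq_of_le hw0 hwrange hj
  refine ⟨_, C.append_mem_extendConst hu α, fun h => ?_, wtVec_append_const u α⟩
  rw [← wtVec_append_const, h, wtVec_zero ((hw0 0).2 rfl)] at hx1
  exact Nat.not_succ_le_zero 0 hx1

theorem exists_fws_submodule [Fact q.Prime] {k n : ℕ} (hkn : k ≤ n)
    (hn : n ≤ ∑ i ∈ Finset.range k, (m + 1) ^ i) :
    ∃ C : Submodule (ZMod q) (Fin n → ZMod q),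
      finrank (ZMod q) C = k ∧ wtSet w (C : Set (Fin n → ZMod q)) = Set.Icc 1 (n * m) := by
  induction k generalizing n with
  | zero =>
    obtain rfl : n = 0 := by simpa using hn
    refine ⟨⊥, finrank_bot _ _, ?_⟩
    simp [wtSet]
  | succ k ih =>
    rw [Finset.sum_range_succ, ← geom_sum_mul_add m k] at hn
    have hk := le_sum_range_pow_succ m k
    obtain ⟨n', t, rfl, hkn', hn', ht, htn'⟩ : ∃ n' t, n = n' + t ∧ k ≤ n' ∧
        n' ≤ ∑ i ∈ Finset.range k, (m + 1) ^ i ∧ 0 < t ∧ t ≤ n' * m + 1 := by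
      rcases le_or_gt (n - 1) (∑ i ∈ Finset.range k, (m + 1) ^ i) with h | h
      · exact ⟨n - 1, 1, by omega, by omega, h, one_pos, by omega⟩
      · exact ⟨_, n - ∑ i ∈ Finset.range k, (m + 1) ^ i, by omega, hk, le_rfl, by omega, by omega⟩
    obtain ⟨C, hCk, hC⟩ := ih hkn' hn'
    exact ⟨C.extendConst t, by rw [C.finrank_extendConst ht, hCk],
      wtSet_extendConst hw0 hwrange htn' hC⟩

end Weights

theorem stmt2_general (q m k n : ℕ) (hq : q.Prime)
    (w : ZMod q → ℕ) (hw0 : ∀ α : ZMod q, w α = 0 ↔ α = 0)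
    (hwrange : {x | ∃ α : ZMod q, α ≠ 0 ∧ w α = x} = Set.Icc 1 m)
    (hkn : k ≤ n) (hn : n ≤ ∑ i ∈ Finset.range k, (m + 1) ^ i) :
    ∃ C : Submodule (ZMod q) (Fin n → ZMod q),
      Module.finrank (ZMod q) C = k ∧
      wtSet w (C : Set (Fin n → ZMod q)) = Set.Icc 1 (n * m) := by
  have : Fact q.Prime := ⟨hq⟩
  exact exists_fws_submodule hw0 hwrange hkn hn

theorem stmt2 (q m k n : ℕ) (hq : q.Prime) (hm : 1 ≤ m) (hk : 1 ≤ k)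
    (w : ZMod q → ℕ) (hw0 : ∀ α : ZMod q, w α = 0 ↔ α = 0)
    (hwrange : {x | ∃ α : ZMod q, α ≠ 0 ∧ w α = x} = Set.Icc 1 m)
    (hkn : k ≤ n) (hn : n ≤ ∑ i ∈ Finset.range k, (m + 1) ^ i) :
    ∃ C : Submodule (ZMod q) (Fin n → ZMod q),
      Module.finrank (ZMod q) C = k ∧
      wtSet w (C : Set (Fin n → ZMod q)) = Set.Icc 1 (n * m) :=
  stmt2_general q m k n hq w hw0 hwrange hkn hn
end

section
/- Let q be a prime, k ≥ 1, and w : ZMod q → ℕ a map satisfying w(α) = 0 if and only if α = 0. Let C be a k-dimensional ZMod q-subspace of (Fin n → ZMod q), and let Δ ∈ ℕ be such that for every nonzero u ∈ C, the set { W(α·u) : α ∈ ZMod q, α ≠ 0 } has at most Δ elements. Then |W(C)|·(q − 1) ≤ (q^k − 1)·Δ. -/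
open Finset

theorem Finset.card_image_mul_card_le_card_mul_of_free {G α β : Type*} [Group G] [Fintype G]
    [MulAction G α] [DecidableEq β] (f : α → β) (S : Finset α)
    (hS : ∀ g : G, ∀ v ∈ S, g • v ∈ S) (hfree : ∀ v ∈ S, ∀ g : G, g • v = v → g = 1)
    {Δ : ℕ} (hΔ : ∀ v ∈ S, #(univ.image fun g : G => f (g • v)) ≤ Δ) :
    #(S.image f) * Fintype.card G ≤ #S * Δ := by
  classical
  refine card_mul_le_card_mul (fun x v => ∃ g : G, f (g • v) = x) ?_ ?_
  · simp only [mem_image]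
    rintro _ ⟨c, hc, rfl⟩
    have hinj : Function.Injective fun g : G => g • c := fun g h (hgh : g • c = h • c) =>
      (inv_mul_eq_one.1 (hfree c hc _ (by rw [mul_smul, hgh, inv_smul_smul]))).symm
    calc Fintype.card G = #(univ.image fun g : G => g • c) := (card_image_of_injective _ hinj).symm
      _ ≤ _ := card_le_card fun v hv => by
        obtain ⟨g, -, rfl⟩ := mem_image.1 hv
        exact (mem_bipartiteAbove _).2 ⟨hS g c hc, g⁻¹, by rw [inv_smul_smul]⟩
  · intro v hv
    refine (card_le_card fun x hx => ?_).trans (hΔ v hv)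
    obtain ⟨-, g, rfl⟩ := (mem_bipartiteBelow _).1 hx
    exact mem_image_of_mem _ (mem_univ g)

theorem Submodule.card_toFinset_erase_zero {K V : Type*} [DivisionRing K] [Fintype K]
    [AddCommGroup V] [Module K V] [Fintype V] [DecidableEq V] (C : Submodule K V)
    [DecidablePred (· ∈ C)] :
    #((C : Set V).toFinset.erase 0) = Fintype.card K ^ Module.finrank K C - 1 := by
  rw [card_erase_of_mem (by simp), Set.toFinset_card, ← Module.card_eq_pow_finrank]
  rfl

theorem Units.eq_one_of_smul_eq_self {K V : Type*} [DivisionRing K] [AddCommGroup V]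
    [Module K V] {v : V} (hv : v ≠ 0) {g : Kˣ} (h : g • v = v) : g = 1 :=
  Units.ext (smul_left_injective K hv (by simpa [Units.smul_def] using h))

theorem setOf_apply_ne_zero_smul_eq_image_units {K V β : Type*} [GroupWithZero K] [Fintype Kˣ]
    [MulAction K V] [DecidableEq β] (f : V → β) (u : V) :
    {x | ∃ α : K, α ≠ 0 ∧ f (α • u) = x} = ↑(univ.image fun g : Kˣ => f (g • u)) := by
  ext x
  simp only [Set.mem_ofPred_eq, coe_image, coe_univ, Set.image_univ, Set.mem_range,
    Units.smul_def]
  rw [Units.exists_iff_ne_zero (p := fun α => f (α • u) = x)]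

theorem stmt5_general (q n k : ℕ) (hq : q.Prime)
    (w : ZMod q → ℕ)
    (C : Submodule (ZMod q) (Fin n → ZMod q))
    (hdim : Module.finrank (ZMod q) C = k)
    (Δ : ℕ)
    (hΔ : ∀ u ∈ C, u ≠ 0 →
      {x | ∃ α : ZMod q, α ≠ 0 ∧ wtVec w (α • u) = x}.ncard ≤ Δ) :
    (wtSet w (C : Set (Fin n → ZMod q))).ncard * (q - 1) ≤ (q ^ k - 1) * Δ := by
  classical
  have : Fact q.Prime := ⟨hq⟩
  set S := (C : Set (Fin n → ZMod q)).toFinset.erase 0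
  have hS : ∀ v, v ∈ S ↔ v ∈ C ∧ v ≠ 0 := by simp [S, and_comm]
  have hW : wtSet w (C : Set (Fin n → ZMod q)) = ↑(S.image (wtVec w)) := by
    ext x
    simp [wtSet, hS, and_assoc]
  have hcount := card_image_mul_card_le_card_mul_of_free (G := (ZMod q)ˣ) (wtVec w) S
    (fun g v hv => by
      rw [hS] at hv ⊢
      exact ⟨C.smul_of_tower_mem g hv.1, (smul_ne_zero_iff_ne g).2 hv.2⟩)
    (fun v hv _ => Units.eq_one_of_smul_eq_self ((hS v).1 hv).2)
    (Δ := Δ) (fun v hv => by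
      have := hΔ v ((hS v).1 hv).1 ((hS v).1 hv).2
      rwa [setOf_apply_ne_zero_smul_eq_image_units, Set.ncard_coe_finset] at this)
  rwa [ZMod.card_units, C.card_toFinset_erase_zero, ZMod.card, hdim, ← Set.ncard_coe_finset,
    ← hW] at hcount

theorem stmt5 (q n k : ℕ) (hq : q.Prime) (hk : 1 ≤ k)
    (w : ZMod q → ℕ) (hw0 : ∀ α : ZMod q, w α = 0 ↔ α = 0)
    (C : Submodule (ZMod q) (Fin n → ZMod q))
    (hdim : Module.finrank (ZMod q) C = k)
    (Δ : ℕ)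
    (hΔ : ∀ u ∈ C, u ≠ 0 →
      {x | ∃ α : ZMod q, α ≠ 0 ∧ wtVec w (α • u) = x}.ncard ≤ Δ) :
    (wtSet w (C : Set (Fin n → ZMod q))).ncard * (q - 1) ≤ (q ^ k - 1) * Δ :=
  stmt5_general q n k hq w C hdim Δ hΔ
end

section
/- Let q be an odd prime and let C be a k-dimensional ZMod q-subspace of (Fin n → ZMod q), k ≥ 1. Then the Lee weight set of C has at most (q^k − 1)/2 elements, i.e., |w_L(C)| ≤ (q^k − 1)/2. -/
/-- The Lee weight of an element of `ZMod q`. -/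
def leeWt {q : ℕ} (α : ZMod q) : ℕ := min α.val (q - α.val)

/-- The Lee weight of a vector. -/
def leeW {q n : ℕ} (c : Fin n → ZMod q) : ℕ := ∑ i, leeWt (c i)

/-- The Lee weight set of a set of vectors. -/
def leeSet {q n : ℕ} (C : Set (Fin n → ZMod q)) : Set ℕ :=
  {x | ∃ c ∈ C, c ≠ 0 ∧ leeW c = x}

lemma leeWt_neg {q : ℕ} [NeZero q] (α : ZMod q) : leeWt (-α) = leeWt α := by
  unfold leeWt
  rcases eq_or_ne α 0 with h | h
  · simp [h]
  · rw [ZMod.neg_val, if_neg h, Nat.sub_sub_self (le_of_lt (ZMod.val_lt α))]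
    exact min_comm _ _

lemma leeW_neg {q n : ℕ} [NeZero q] (c : Fin n → ZMod q) : leeW (-c) = leeW c := by
  unfold leeW
  exact Finset.sum_congr rfl fun i _ => by simp [leeWt_neg]

theorem stmt7 (q n k : ℕ) (hq : q.Prime) (hodd : Odd q)
    (C : Submodule (ZMod q) (Fin n → ZMod q))
    (hdim : Module.finrank (ZMod q) C = k) (hk : 1 ≤ k) :
    (leeSet (C : Set (Fin n → ZMod q))).ncard ≤ (q ^ k - 1) / 2 := by
  classical
  haveI : Fact q.Prime := ⟨hq⟩
  haveI : NeZero q := ⟨hq.ne_zero⟩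
  set S : Finset (Fin n → ZMod q) :=
    Finset.univ.filter (fun c => c ∈ C ∧ c ≠ 0) with hS
  have hset : leeSet (C : Set (Fin n → ZMod q)) = ↑(S.image leeW) := by
    ext x
    simp only [leeSet, Set.mem_setOf_eq, Finset.coe_image, Set.mem_image,
      Finset.mem_coe, hS, Finset.mem_filter, Finset.mem_univ, true_and]
    constructor
    · rintro ⟨c, hc, hc0, rfl⟩; exact ⟨c, ⟨hc, hc0⟩, rfl⟩
    · rintro ⟨c, ⟨hc, hc0⟩, rfl⟩; exact ⟨c, hc, hc0, rfl⟩
  rw [hset, Set.ncard_coe_finset]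
  -- card of S
  have hcardC : Fintype.card C = q ^ k := by
    rw [Module.card_eq_pow_finrank (K := ZMod q) (V := C), hdim, ZMod.card]
  have hScard : S.card = q ^ k - 1 := by
    have : S = (Finset.univ.filter (fun c => c ∈ C)).erase 0 := by
      ext c
      simp [hS, Finset.mem_erase, and_comm]
    rw [this, Finset.card_erase_of_mem (by simp [C.zero_mem])]
    congr 1
    rw [← hcardC]
    have : Finset.univ.filter (fun c => c ∈ C) = (C : Set (Fin n → ZMod q)).toFinset := by
      ext c; simp
    rw [this, Set.toFinset_card]
    rfl
  -- each fiber has at least two elements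
  have key : 2 * (S.image leeW).card ≤ S.card := by
    rw [Finset.card_eq_sum_card_fiberwise
      (f := leeW) (t := S.image leeW) (fun c hc => Finset.mem_image_of_mem leeW hc)]
    calc 2 * (S.image leeW).card = ∑ _x ∈ S.image leeW, 2 := by
          rw [Finset.sum_const, smul_eq_mul, mul_comm]
      _ ≤ _ := by
          apply Finset.sum_le_sum
          intro x hx
          obtain ⟨c, hcS, hcx⟩ := Finset.mem_image.mp hx
          obtain ⟨-, hc, hc0⟩ := Finset.mem_filter.mp hcS
          have hne : c ≠ -c := by
            intro h
            apply hc0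
            have h2 : (2 : ZMod q) • c = 0 := by
              rw [two_smul]
              exact add_eq_zero_iff_eq_neg.mpr h
            have h2ne : (2 : ZMod q) ≠ 0 := by
              intro h2z
              have hdvd : q ∣ 2 := by
                have : ((2 : ℕ) : ZMod q) = 0 := by exact_mod_cast h2z
                exact (ZMod.natCast_eq_zero_iff 2 q).mp this
              have hq2 : q = 2 := (Nat.prime_dvd_prime_iff_eq hq Nat.prime_two).mp hdvd
              rw [hq2] at hodd
              exact (by norm_num : ¬ Odd 2) hodd
            exact (smul_eq_zero.mp h2).resolve_left h2ne
          have hsub : ({c, -c} : Finset (Fin n → ZMod q)) ⊆ S.filter (fun y => leeW y = x) := by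
            intro y hy
            rcases Finset.mem_insert.mp hy with rfl | hy
            · exact Finset.mem_filter.mpr ⟨hcS, hcx⟩
            · rcases Finset.mem_singleton.mp hy with rfl
              refine Finset.mem_filter.mpr ⟨Finset.mem_filter.mpr ⟨Finset.mem_univ _, C.neg_mem hc, neg_ne_zero.mpr hc0⟩, ?_⟩
              rw [leeW_neg, hcx]
          have : ({c, -c} : Finset (Fin n → ZMod q)).card = 2 := by
            rw [Finset.card_insert_of_notMem (by simpa using hne), Finset.card_singleton]
          calc 2 = ({c, -c} : Finset (Fin n → ZMod q)).card := by rw [this]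
            _ ≤ _ := Finset.card_le_card hsub
  rw [← hScard]
  omega
end

section
/- Let q be an odd prime and let C be a k-dimensional ZMod q-subspace of (Fin n → ZMod q) with |w_L(C)| = (q^k − 1)/2 (a Lee-MWS code). Then every nonzero codeword c ∈ C satisfies |supp(c)| ≥ k; in particular every nonzero codeword has Lee weight at least k. -/
lemma leeWt_pos {q : ℕ} [NeZero q] {α : ZMod q} (h : α ≠ 0) : 1 ≤ leeWt α := by
  have hv : α.val < q := ZMod.val_lt α
  have h0 : α.val ≠ 0 := fun hz => h ((ZMod.val_eq_zero α).mp hz)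
  refine le_min ?_ ?_ <;> omega

lemma vec_eq_zero_of_self_eq_neg {q n : ℕ} (hq : q.Prime) (hodd : Odd q)
    {a : Fin n → ZMod q} (h : a = -a) : a = 0 := by
  haveI : Fact q.Prime := ⟨hq⟩
  have h2 : (2 : ZMod q) ≠ 0 := by
    intro h2
    have hdvd : (q : ℕ) ∣ 2 := by
      exact_mod_cast (ZMod.natCast_eq_zero_iff 2 q).mp (by exact_mod_cast h2)
    have := (Nat.prime_dvd_prime_iff_eq hq Nat.prime_two).mp hdvd
    rw [this] at hodd
    exact (Nat.not_odd_iff_even.mpr (even_two)) hodd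
  funext i
  have hi : a i = -(a i) := congrFun h i
  have hmul : (2 : ZMod q) * a i = 0 := by linear_combination hi
  simpa using (mul_eq_zero.mp hmul).resolve_left h2

theorem stmt9 (q n k : ℕ) (hq : q.Prime) (hodd : Odd q)
    (C : Submodule (ZMod q) (Fin n → ZMod q))
    (hdim : Module.finrank (ZMod q) C = k)
    (hMWS : (leeSet (C : Set (Fin n → ZMod q))).ncard = (q ^ k - 1) / 2) :
    ∀ c ∈ C, c ≠ 0 → k ≤ (Function.support c).ncard ∧ k ≤ leeW c := by
  classical
  haveI : Fact q.Prime := ⟨hq⟩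
  haveI : NeZero q := ⟨hq.pos.ne'⟩
  -- support size ≤ Lee weight
  have hsupp_le : ∀ c : Fin n → ZMod q, (Function.support c).ncard ≤ leeW c := by
    intro c
    have hset : Function.support c = ↑(Finset.univ.filter fun i => c i ≠ 0) := by
      ext i; simp [Function.mem_support]
    rw [hset, Set.ncard_coe_finset]
    calc (Finset.univ.filter fun i => c i ≠ 0).card
        = ∑ i ∈ Finset.univ.filter (fun i => c i ≠ 0), 1 := by simp
      _ ≤ ∑ i ∈ Finset.univ.filter (fun i => c i ≠ 0), leeWt (c i) :=
          Finset.sum_le_sum (fun i hi => leeWt_pos (Finset.mem_filter.mp hi).2)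
      _ ≤ ∑ i, leeWt (c i) :=
          Finset.sum_le_sum_of_subset (Finset.filter_subset _ _)
      _ = leeW c := rfl
  have leeW_neg : ∀ c : Fin n → ZMod q, leeW (-c) = leeW c := by
    intro c
    unfold leeW
    exact Finset.sum_congr rfl (fun i _ => by simpa using leeWt_neg (c i))
  -- the finset of nonzero codewords
  set T : Finset (Fin n → ZMod q) :=
    Finset.univ.filter (fun x => x ∈ C ∧ x ≠ 0) with hT
  have hmemT : ∀ x, x ∈ T ↔ x ∈ C ∧ x ≠ 0 := by
    intro x; simp [hT]
  -- cardinality of T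
  have hcardC : Fintype.card C = q ^ k := by
    rw [Module.card_eq_pow_finrank (K := ZMod q) (V := C), ZMod.card, hdim]
  have hTcard : T.card = q ^ k - 1 := by
    have : T = (Finset.univ.filter (fun x => x ∈ C)) \ {0} := by
      ext x
      simp [hT, and_comm]
    rw [this, Finset.card_sdiff_of_subset (by simp [C.zero_mem]), Finset.card_singleton]
    congr 1
    rw [← Set.ncard_coe_finset]
    have h1 : (↑(Finset.univ.filter (fun x : Fin n → ZMod q => x ∈ C)) : Set _)
        = (C : Set (Fin n → ZMod q)) := by ext x; simp
    rw [h1, ← Nat.card_coe_set_eq, Nat.card_eq_fintype_card]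
    exact hcardC
  -- negation maps T to T
  have hnegT : ∀ x ∈ T, -x ∈ T := by
    intro x hx
    rw [hmemT] at hx ⊢
    exact ⟨C.neg_mem hx.1, fun h => hx.2 (by simpa using congrArg Neg.neg h)⟩
  have hne_neg : ∀ x ∈ T, -x ≠ x := by
    intro x hx h
    exact ((hmemT x).mp hx).2 (vec_eq_zero_of_self_eq_neg hq hodd h.symm)
  -- leeSet is the image of leeW on T
  have himage : leeSet (C : Set (Fin n → ZMod q)) = ↑(T.image leeW) := by
    ext x
    simp only [leeSet, Set.mem_setOf_eq, Finset.coe_image, Set.mem_image,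
      Finset.mem_coe]
    constructor
    · rintro ⟨c, hc, hc0, rfl⟩; exact ⟨c, (hmemT c).mpr ⟨hc, hc0⟩, rfl⟩
    · rintro ⟨c, hc, rfl⟩
      obtain ⟨h1, h2⟩ := (hmemT c).mp hc
      exact ⟨c, h1, h2, rfl⟩
  have hIcard : (T.image leeW).card = (q ^ k - 1) / 2 := by
    rw [← Set.ncard_coe_finset, ← himage, hMWS]
  -- fibers of leeW on T have size exactly 2
  have hfiber2 : ∀ v ∈ T.image leeW, (T.filter (fun c => leeW c = v)).card = 2 := by
    have heven : 2 * ((q ^ k - 1) / 2) = q ^ k - 1 := by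
      apply Nat.mul_div_cancel'
      obtain ⟨m, hm⟩ := hodd.pow (n := k)
      omega
    have hsum : ∑ v ∈ T.image leeW, (T.filter (fun c => leeW c = v)).card
        = q ^ k - 1 := by
      rw [← hTcard]
      exact (Finset.card_eq_sum_card_image leeW T).symm
    have hge : ∀ v ∈ T.image leeW, 2 ≤ (T.filter (fun c => leeW c = v)).card := by
      intro v hv
      obtain ⟨a, ha, rfl⟩ := Finset.mem_image.mp hv
      have h1 : a ∈ T.filter (fun c => leeW c = leeW a) := by
        simp [ha]
      have h2 : -a ∈ T.filter (fun c => leeW c = leeW a) :=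
        Finset.mem_filter.mpr ⟨hnegT a ha, leeW_neg a⟩
      have : ({a, -a} : Finset _) ⊆ T.filter (fun c => leeW c = leeW a) := by
        intro x hx
        rcases Finset.mem_insert.mp hx with rfl | hx
        · exact h1
        · rw [Finset.mem_singleton] at hx; subst hx; exact h2
      calc 2 = ({a, -a} : Finset _).card := by
              rw [Finset.card_insert_of_notMem (by simpa using (hne_neg a ha).symm)]
              simp
        _ ≤ _ := Finset.card_le_card this
    intro v hv
    by_contra hne
    have hlt : 2 < (T.filter (fun c => leeW c = v)).card :=
      lt_of_le_of_ne (hge v hv) (Ne.symm hne)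
    have : ∑ v ∈ T.image leeW, 2 < ∑ v ∈ T.image leeW, (T.filter (fun c => leeW c = v)).card :=
      Finset.sum_lt_sum (fun i hi => hge i hi) ⟨v, hv, hlt⟩
    rw [hsum, Finset.sum_const, smul_eq_mul, hIcard] at this
    omega
  -- key: same Lee weight in T implies equal or negatives
  have hkey : ∀ a ∈ T, ∀ b ∈ T, leeW a = leeW b → b = a ∨ b = -a := by
    intro a ha b hb hab
    have hv : leeW a ∈ T.image leeW := Finset.mem_image_of_mem _ ha
    have hcard := hfiber2 _ hv
    have hsub : ({a, -a} : Finset _) ⊆ T.filter (fun c => leeW c = leeW a) := by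
      intro x hx
      rcases Finset.mem_insert.mp hx with rfl | hx
      · simp [ha]
      · rw [Finset.mem_singleton] at hx; subst hx
        simp [hnegT a ha, leeW_neg]
    have hpair : ({a, -a} : Finset _).card = 2 := by
      rw [Finset.card_insert_of_notMem (by simpa using (hne_neg a ha).symm)]
      simp
    have heq : T.filter (fun c => leeW c = leeW a) = ({a, -a} : Finset _) :=
      (Finset.eq_of_subset_of_card_le hsub (by rw [hcard, hpair])).symm
    have hbmem : b ∈ ({a, -a} : Finset _) := by
      rw [← heq]
      simp [hb, hab.symm]
    simpa using hbmem
  -- main argument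
  intro c hc hc0
  suffices hs : k ≤ (Function.support c).ncard by
    exact ⟨hs, le_trans hs (hsupp_le c)⟩
  by_contra hlt
  push_neg at hlt
  -- the shortening map
  set S : Finset (Fin n) := Finset.univ.filter (fun i => c i ≠ 0) with hS
  have hScard : S.card = (Function.support c).ncard := by
    have hset : Function.support c = ↑S := by
      ext i; simp [Function.mem_support, hS]
    rw [hset, Set.ncard_coe_finset]
  let φ : C →ₗ[ZMod q] ({ i // i ∈ S } → ZMod q) :=
    { toFun := fun x i => (x : Fin n → ZMod q) i
      map_add' := fun x y => rfl
      map_smul' := fun m x => rfl }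
  have hrange : Module.finrank (ZMod q) (LinearMap.range φ) < k := by
    calc Module.finrank (ZMod q) (LinearMap.range φ)
        ≤ Module.finrank (ZMod q) ({ i // i ∈ S } → ZMod q) :=
          Submodule.finrank_le _
      _ = S.card := by simp [Module.finrank_pi]
      _ < k := by rw [hScard]; exact hlt
  have hker : Module.finrank (ZMod q) (LinearMap.ker φ) > 0 := by
    have := LinearMap.finrank_range_add_finrank_ker φ
    rw [hdim] at this
    omega
  have : Nontrivial (LinearMap.ker φ) := Module.nontrivial_of_finrank_pos hker
  obtain ⟨d0, hd0⟩ := exists_ne (0 : LinearMap.ker φ)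
  set d : Fin n → ZMod q := ((d0 : C) : Fin n → ZMod q) with hd
  have hdC : d ∈ C := (d0 : C).2
  have hdvanish : ∀ i, c i ≠ 0 → d i = 0 := by
    intro i hi
    have : φ (d0 : C) = 0 := d0.2
    have := congrFun this ⟨i, by simp [hS, hi]⟩
    exact this
  have hdne : d ≠ 0 := by
    intro h
    apply hd0
    ext
    exact congrFun (by exact_mod_cast h : ((d0 : C) : Fin n → ZMod q) = 0) _
  -- c + d and c - d
  have hcd1 : c + d ∈ T := by
    rw [hmemT]
    refine ⟨C.add_mem hc hdC, ?_⟩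
    intro h
    obtain ⟨i, hi⟩ := Function.ne_iff.mp hc0
    have : c i + d i = 0 := congrFun h i
    rw [hdvanish i hi, add_zero] at this
    exact hi this
  have hcd2 : c - d ∈ T := by
    rw [hmemT]
    refine ⟨C.sub_mem hc hdC, ?_⟩
    intro h
    obtain ⟨i, hi⟩ := Function.ne_iff.mp hc0
    have : c i - d i = 0 := congrFun h i
    rw [hdvanish i hi, sub_zero] at this
    exact hi this
  have hw : leeW (c + d) = leeW (c - d) := by
    unfold leeW
    apply Finset.sum_congr rfl
    intro i _
    rcases eq_or_ne (c i) 0 with h0 | h0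
    · have : (c + d) i = d i := by simp [h0]
      have h2 : (c - d) i = -(d i) := by simp [h0]
      rw [this, h2, leeWt_neg]
    · have hdi := hdvanish i h0
      have h1 : (c + d) i = c i := by simp [hdi]
      have h2 : (c - d) i = c i := by simp [hdi]
      rw [h1, h2]
  have := hkey _ hcd1 _ hcd2 hw
  rcases this with h | h
  · -- c - d = c + d ⟹ d = -d ⟹ d = 0
    apply hdne
    apply vec_eq_zero_of_self_eq_neg hq hodd
    funext i
    have hi := congrFun h i
    simp only [Pi.sub_apply, Pi.add_apply, Pi.neg_apply] at hi ⊢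
    linear_combination -hi
  · -- c - d = -(c + d) ⟹ c = -c ⟹ c = 0
    apply hc0
    apply vec_eq_zero_of_self_eq_neg hq hodd
    funext i
    have hi := congrFun h i
    simp only [Pi.sub_apply, Pi.add_apply, Pi.neg_apply] at hi ⊢
    linear_combination hi
end

section
/- Let q be an odd natural number with q ≥ 3 and let u₁, u₂ ∈ ZMod q. If w_L(u₁ − u₂) = w_L(u₁ + u₂), then u₁ = 0 or u₂ = 0. -/
lemma leeWt_eq_min_neg {q : ℕ} [NeZero q] (α : ZMod q) :
    leeWt α = min α.val (-α).val := by
  rcases eq_or_ne α 0 with rfl | h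
  · simp [leeWt]
  · rw [leeWt, ZMod.neg_val, if_neg h]

lemma eq_or_eq_neg_of_leeWt_eq {q : ℕ} [NeZero q] (a b : ZMod q)
    (h : leeWt a = leeWt b) : a = b ∨ a = -b := by
  rw [leeWt_eq_min_neg, leeWt_eq_min_neg] at h
  rcases min_cases a.val (-a).val with ⟨h1, _⟩ | ⟨h1, _⟩ <;>
    rcases min_cases b.val (-b).val with ⟨h2, _⟩ | ⟨h2, _⟩ <;>
      rw [h1, h2] at h
  · exact Or.inl (ZMod.val_injective q h)
  · exact Or.inr (ZMod.val_injective q h)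
  · exact Or.inr (by have := ZMod.val_injective q h; rw [← this]; ring)
  · exact Or.inl (by have := ZMod.val_injective q h; rw [← neg_inj, this])

lemma two_mul_eq_zero {q : ℕ} [NeZero q] (hodd : Odd q) (u : ZMod q)
    (h : u + u = 0) : u = 0 := by
  by_contra hu
  have hn : u = -u := by linear_combination h
  have hv : u.val = q - u.val := by
    conv_lhs => rw [hn]
    rw [ZMod.neg_val, if_neg hu]
  have hlt : u.val < q := ZMod.val_lt u
  have : 2 * u.val = q := by omega
  have hq2 : q % 2 = 1 := Nat.odd_iff.mp hodd
  omega

theorem stmt11 (q : ℕ) (hodd : Odd q) (hq : 3 ≤ q) (u₁ u₂ : ZMod q)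
    (h : leeWt (u₁ - u₂) = leeWt (u₁ + u₂)) :
    u₁ = 0 ∨ u₂ = 0 := by
  haveI : NeZero q := ⟨by omega⟩
  rcases eq_or_eq_neg_of_leeWt_eq _ _ h with h1 | h1
  · right
    apply two_mul_eq_zero hodd
    linear_combination -h1
  · left
    apply two_mul_eq_zero hodd
    linear_combination h1
end

section
/- Let q be an odd natural number with q ≥ 3, let k ≥ 1, and let u, v : Fin k → ZMod q. If w_L(u i) = w_L(v i) for all i, and w_L(u i + u j) = w_L(v i + v j) for all i, j, then u = v or u = −v. -/
lemma leeWt_eq_cases {q : ℕ} [NeZero q] (x y : ZMod q) (h : leeWt x = leeWt y) :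
    y = x ∨ y = -x := by
  unfold leeWt at h
  have hx := ZMod.val_lt x
  have hy := ZMod.val_lt y
  have : x.val = y.val ∨ x.val + y.val = q := by omega
  rcases this with h' | h'
  · left
    have hxc : ((x.val : ℕ) : ZMod q) = x := by simp [ZMod.natCast_val, ZMod.cast_id]
    have hyc : ((y.val : ℕ) : ZMod q) = y := by simp [ZMod.natCast_val, ZMod.cast_id]
    rw [← hxc, ← hyc, h']
  · right
    have : x + y = 0 := by
      have hxc : ((x.val : ℕ) : ZMod q) = x := by simp [ZMod.natCast_val, ZMod.cast_id]
      have hyc : ((y.val : ℕ) : ZMod q) = y := by simp [ZMod.natCast_val, ZMod.cast_id]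
      rw [← hxc, ← hyc, ← Nat.cast_add, h', ZMod.natCast_self]
    linear_combination this

lemma leeDoubleNeZero {q : ℕ} (hodd : Odd q) (hq : 3 ≤ q) (x : ZMod q) (hx : x ≠ 0) :
    x + x ≠ 0 := by
  intro h
  have h2 : (2 : ZMod q) * x = 0 := by ring_nf; linear_combination h
  have hu : IsUnit (2 : ZMod q) := by
    have : ((2 : ℕ) : ZMod q) = 2 := by norm_num
    rw [← this, ZMod.isUnit_iff_coprime]
    exact hodd.coprime_two_left
  exact hx (by simpa [h2] using (hu.mul_right_eq_zero).mp h2)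

theorem stmt12 (q k : ℕ) (hodd : Odd q) (hq : 3 ≤ q) (hk : 1 ≤ k)
    (u v : Fin k → ZMod q)
    (h1 : ∀ i, leeWt (u i) = leeWt (v i))
    (h2 : ∀ i j, leeWt (u i + u j) = leeWt (v i + v j)) :
    u = v ∨ u = -v := by
  have : NeZero q := ⟨by omega⟩
  by_cases hall : ∀ i, u i = v i
  · left; funext i; exact hall i
  · right
    push_neg at hall
    obtain ⟨i, hi⟩ := hall
    have hvi : v i = -u i := by
      rcases leeWt_eq_cases (u i) (v i) (h1 i) with h | h
      · exact absurd h.symm hi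
      · exact h
    have hui0 : u i ≠ 0 := by
      intro h0
      exact hi (by rw [hvi, h0, neg_zero])
    funext j
    rcases leeWt_eq_cases (u j) (v j) (h1 j) with h | h
    · -- v j = u j : derive contradiction unless u j = 0
      by_cases huj0 : u j = 0
      · show u j = -(v j)
        rw [h, huj0, neg_zero]
      · exfalso
        have key := h2 i j
        rw [hvi, h] at key
        rcases leeWt_eq_cases (u i + u j) (-u i + u j) key with hc | hc
        · exact leeDoubleNeZero hodd hq (u i) hui0 (by linear_combination -hc)
        · exact leeDoubleNeZero hodd hq (u j) huj0 (by linear_combination hc)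
    · show u j = -(v j)
      rw [h, neg_neg]
end

section
/- Let q be an odd prime and k ≥ 1. There exists a k-dimensional ZMod q-subspace C of (Fin n → ZMod q) whose Lee weight set equals {1, 2, …, n·(q−1)/2} (a Lee-FWS code) if and only if k ≤ n ≤ Σ_{i=0}^{k−1} ((q+1)/2)^i. -/
namespace LeeAux

variable {q m : ℕ}

theorem leeWt_le (hm : q = 2 * m + 1) (α : ZMod q) : leeWt α ≤ m := by
  haveI : NeZero q := ⟨by omega⟩
  have := ZMod.val_lt α
  unfold leeWt; omega

theorem leeWt_zero (hm : q = 2 * m + 1) : leeWt (0 : ZMod q) = 0 := by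
  haveI : NeZero q := ⟨by omega⟩
  simp [leeWt, ZMod.val_zero]

theorem leeWt_eq_zero (hm : q = 2 * m + 1) {α : ZMod q} (h : leeWt α = 0) : α = 0 := by
  haveI : NeZero q := ⟨by omega⟩
  have h1 := ZMod.val_lt α
  have : α.val = 0 := by unfold leeWt at h; omega
  exact (ZMod.val_eq_zero α).mp this

theorem leeWt_natCast (hm : q = 2 * m + 1) {a : ℕ} (ha : a ≤ m) : leeWt (a : ZMod q) = a := by
  haveI : NeZero q := ⟨by omega⟩
  have : (a : ZMod q).val = a := ZMod.val_cast_of_lt (by omega)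
  unfold leeWt; omega

theorem leeWt_le_natAbs (hm : q = 2 * m + 1) {α : ZMod q} {r : ℤ} (hr : (r : ZMod q) = α) :
    leeWt α ≤ r.natAbs := by
  haveI : NeZero q := ⟨by omega⟩
  have hval := ZMod.val_lt α
  have hcast : ((α.val : ℤ) : ZMod q) = α := by
    push_cast
    rw [ZMod.natCast_val, ZMod.cast_id]
  have hdvd : (q : ℤ) ∣ r - α.val := by
    rw [← ZMod.intCast_zmod_eq_zero_iff_dvd]
    push_cast
    rw [hr, ZMod.natCast_val, ZMod.cast_id]
    ring
  obtain ⟨tt, htt⟩ := hdvd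
  have htt' : r = (α.val : ℤ) + q * tt := by omega
  rcases lt_trichotomy tt 0 with h | h | h
  · have h1 : (q : ℤ) * tt ≤ q * (-1) := by
      apply mul_le_mul_of_nonneg_left (by omega) (by positivity)
    rw [mul_neg_one] at h1
    unfold leeWt; omega
  · subst h; unfold leeWt; omega
  · have h1 : (q : ℤ) * 1 ≤ q * tt := by
      apply mul_le_mul_of_nonneg_left (by omega) (by positivity)
    rw [mul_one] at h1
    unfold leeWt; omega

theorem leeWt_rep (hm : q = 2 * m + 1) (α : ZMod q) :
    ∃ r : ℤ, ((r : ZMod q) = α) ∧ r.natAbs = leeWt α := by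
  haveI : NeZero q := ⟨by omega⟩
  have hval := ZMod.val_lt α
  have hcast : ((α.val : ℤ) : ZMod q) = α := by
    push_cast
    rw [ZMod.natCast_val, ZMod.cast_id]
  by_cases h : α.val ≤ m
  · exact ⟨α.val, hcast, by unfold leeWt; omega⟩
  · refine ⟨(α.val : ℤ) - q, ?_, ?_⟩
    · push_cast
      rw [ZMod.natCast_val, ZMod.cast_id, ZMod.natCast_self]
      ring
    · unfold leeWt; omega

theorem leeWt_add_le (hm : q = 2 * m + 1) (α β : ZMod q) :
    leeWt (α + β) ≤ leeWt α + leeWt β := by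
  obtain ⟨r, hr, hra⟩ := leeWt_rep hm α
  obtain ⟨s, hs, hsa⟩ := leeWt_rep hm β
  have : ((r + s : ℤ) : ZMod q) = α + β := by push_cast [hr, hs]; ring
  calc leeWt (α + β) ≤ (r + s).natAbs := leeWt_le_natAbs hm this
    _ ≤ r.natAbs + s.natAbs := Int.natAbs_add_le r s
    _ = leeWt α + leeWt β := by rw [hra, hsa]

theorem leeWt_mul_le (hm : q = 2 * m + 1) (α β : ZMod q) :
    leeWt (α * β) ≤ leeWt α * leeWt β := by
  obtain ⟨r, hr, hra⟩ := leeWt_rep hm α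
  obtain ⟨s, hs, hsa⟩ := leeWt_rep hm β
  have : ((r * s : ℤ) : ZMod q) = α * β := by push_cast [hr, hs]; ring
  calc leeWt (α * β) ≤ (r * s).natAbs := leeWt_le_natAbs hm this
    _ = leeWt α * leeWt β := by rw [Int.natAbs_mul, hra, hsa]

variable {n : ℕ}

theorem leeW_zero (hm : q = 2 * m + 1) : leeW (0 : Fin n → ZMod q) = 0 := by
  simp [leeW, leeWt_zero hm]

theorem leeW_le (hm : q = 2 * m + 1) (c : Fin n → ZMod q) : leeW c ≤ n * m := by
  calc leeW c ≤ ∑ _i : Fin n, m := Finset.sum_le_sum fun i _ => leeWt_le hm _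
    _ = n * m := by simp [Finset.sum_const, mul_comm]

theorem leeW_add_le (hm : q = 2 * m + 1) (x y : Fin n → ZMod q) :
    leeW (x + y) ≤ leeW x + leeW y := by
  unfold leeW
  rw [← Finset.sum_add_distrib]
  exact Finset.sum_le_sum fun i _ => leeWt_add_le hm _ _

theorem leeW_smul_le (hm : q = 2 * m + 1) (a : ZMod q) (x : Fin n → ZMod q) :
    leeW (a • x) ≤ leeWt a * leeW x := by
  unfold leeW
  rw [Finset.mul_sum]
  refine Finset.sum_le_sum fun i _ => ?_
  have : (a • x) i = a * x i := rfl
  rw [this]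
  exact leeWt_mul_le hm _ _

theorem leeW_pos (hm : q = 2 * m + 1) {x : Fin n → ZMod q} (hx : x ≠ 0) : 1 ≤ leeW x := by
  obtain ⟨i, hi⟩ := Function.ne_iff.mp hx
  have h1 : 1 ≤ leeWt (x i) := by
    rcases Nat.eq_zero_or_pos (leeWt (x i)) with h | h
    · exact absurd (leeWt_eq_zero hm h) hi
    · exact h
  calc 1 ≤ leeWt (x i) := h1
    _ ≤ leeW x := by
      unfold leeW
      exact Finset.single_le_sum (f := fun j => leeWt (x j)) (fun j _ => Nat.zero_le _) (Finset.mem_univ i)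

end LeeAux

namespace LeeAux

theorem key (q m N : ℕ) (hq : q.Prime) (hm : q = 2 * m + 1) :
    ∀ (j : ℕ) (μ : (Fin N → ZMod q) → ℕ), μ 0 = 0 →
      (∀ x y, μ (x + y) ≤ μ x + μ y) →
      (∀ (a : ZMod q) x, μ (a • x) ≤ leeWt a * μ x) →
      ∀ S : Submodule (ZMod q) (Fin N → ZMod q), Module.finrank (ZMod q) S ≤ j →
      (∀ x ∈ S, μ x = 0 → x = 0) →
      ∀ t M : ℕ, 0 < t →
      (∀ v ≤ M, ∃ x ∈ S, μ x ≤ v ∧ v < μ x + t) → M < t * (m + 1) ^ j := by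
  haveI := Fact.mk hq
  haveI : NeZero q := ⟨hq.ne_zero⟩
  intro j
  induction j with
  | zero =>
    intro μ hμ0 _ _ S hrank hdef t M ht hcov
    obtain ⟨x, hxS, hx1, hx2⟩ := hcov M le_rfl
    have hS : S = ⊥ := by
      rw [← Submodule.finrank_eq_zero (R := ZMod q)]
      omega
    have hx0 : x = 0 := by
      rw [hS] at hxS
      simpa using hxS
    rw [hx0, hμ0] at hx2
    simpa using hx2
  | succ j ih =>
    intro μ hμ0 hadd hsmul S hrank hdef t M ht hcov
    by_cases hMt : M < t
    · calc M < t := hMt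
        _ ≤ t * (m + 1) ^ (j + 1) := Nat.le_mul_of_pos_right t (by positivity)
    push_neg at hMt
    obtain ⟨c, hcS, hc1, hc2⟩ := hcov t hMt
    have hcpos : 0 < μ c := by omega
    have hc0 : c ≠ 0 := by
      intro h
      rw [h, hμ0] at hcpos
      omega
    obtain ⟨i, hci⟩ : ∃ i, c i ≠ 0 := Function.ne_iff.mp hc0
    set W : Submodule (ZMod q) (Fin N → ZMod q) :=
      S ⊓ LinearMap.ker (LinearMap.proj (R := ZMod q) (φ := fun _ : Fin N => ZMod q) i) with hWdef
    have hWS : W ≤ S := inf_le_left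
    have hmemW : ∀ y, y ∈ W ↔ y ∈ S ∧ y i = 0 := by
      intro y
      simp [hWdef, LinearMap.mem_ker]
    have hWrank : Module.finrank (ZMod q) W ≤ j := by
      have hlt : W < S := by
        refine lt_of_le_of_ne hWS (fun h => hci ?_)
        have : c ∈ W := h ▸ hcS
        exact ((hmemW c).mp this).2
      have := Submodule.finrank_lt_finrank_of_lt hlt
      omega
    set ν : (Fin N → ZMod q) → ℕ :=
      fun y => Finset.univ.inf' Finset.univ_nonempty (fun a : ZMod q => μ (y + a • c)) with hνdef
    have hν_le : ∀ y (a : ZMod q), ν y ≤ μ (y + a • c) :=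
      fun y a => Finset.inf'_le _ (Finset.mem_univ a)
    have hν_ex : ∀ y, ∃ a : ZMod q, ν y = μ (y + a • c) := by
      intro y
      obtain ⟨a, _, ha⟩ := Finset.exists_mem_eq_inf' (Finset.univ_nonempty)
        (fun a : ZMod q => μ (y + a • c))
      exact ⟨a, ha⟩
    have hν0 : ν 0 = 0 := by
      have h1 : ν 0 ≤ μ (0 + (0 : ZMod q) • c) := hν_le 0 0
      simpa [hμ0] using h1
    have hνadd : ∀ y z, ν (y + z) ≤ ν y + ν z := by
      intro y z
      obtain ⟨a, ha⟩ := hν_ex y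
      obtain ⟨b, hb⟩ := hν_ex z
      have heq : y + z + (a + b) • c = (y + a • c) + (z + b • c) := by
        rw [add_smul]; abel
      calc ν (y + z) ≤ μ (y + z + (a + b) • c) := hν_le _ _
        _ = μ ((y + a • c) + (z + b • c)) := by rw [heq]
        _ ≤ μ (y + a • c) + μ (z + b • c) := hadd _ _
        _ = ν y + ν z := by rw [ha, hb]
    have hνsmul : ∀ (a : ZMod q) y, ν (a • y) ≤ leeWt a * ν y := by
      intro a y
      obtain ⟨b, hb⟩ := hν_ex y
      have heq : a • y + (a * b) • c = a • (y + b • c) := by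
        rw [smul_add, mul_smul]
      calc ν (a • y) ≤ μ (a • y + (a * b) • c) := hν_le _ _
        _ = μ (a • (y + b • c)) := by rw [heq]
        _ ≤ leeWt a * μ (y + b • c) := hsmul _ _
        _ = leeWt a * ν y := by rw [hb]
    have hνdefW : ∀ y ∈ W, ν y = 0 → y = 0 := by
      intro y hyW hy0
      obtain ⟨a, ha⟩ := hν_ex y
      have hyS : y ∈ S := hWS hyW
      have hmem : y + a • c ∈ S := S.add_mem hyS (S.smul_mem a hcS)
      have hz : y + a • c = 0 := hdef _ hmem (by omega)
      have hyi : y i = 0 := ((hmemW y).mp hyW).2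
      have hzi : y i + a * c i = 0 := by
        have := congrFun hz i
        simpa using this
      have ha0 : a = 0 := by
        rw [hyi, zero_add] at hzi
        rcases mul_eq_zero.mp hzi with h | h
        · exact h
        · exact absurd h hci
      rw [ha0, zero_smul, add_zero] at hz
      exact hz
    have hνcov : ∀ v ≤ M, ∃ x ∈ W, ν x ≤ v ∧ v < ν x + (m + 1) * t := by
      intro v hv
      obtain ⟨x, hxS, h1, h2⟩ := hcov v hv
      set a₀ : ZMod q := x i * (c i)⁻¹ with ha₀
      set w : Fin N → ZMod q := x - a₀ • c with hw
      have hwx : w + a₀ • c = x := by rw [hw]; abel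
      have hwS : w ∈ S := S.sub_mem hxS (S.smul_mem _ hcS)
      have hwi : w i = 0 := by
        have : w i = x i - a₀ * c i := rfl
        rw [this, ha₀, mul_assoc, inv_mul_cancel₀ hci, mul_one, sub_self]
      have hwW : w ∈ W := (hmemW w).mpr ⟨hwS, hwi⟩
      have hνw_le : ν w ≤ μ x := by
        have := hν_le w a₀
        rwa [hwx] at this
      obtain ⟨b, hb⟩ := hν_ex w
      have heq : (w + b • c) + (a₀ - b) • c = x := by
        rw [sub_smul, ← hwx]; abel
      have hup : μ x ≤ ν w + m * t := by
        calc μ x = μ ((w + b • c) + (a₀ - b) • c) := by rw [heq]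
          _ ≤ μ (w + b • c) + μ ((a₀ - b) • c) := hadd _ _
          _ ≤ μ (w + b • c) + leeWt (a₀ - b) * μ c := by
              have := hsmul (a₀ - b) c
              omega
          _ ≤ ν w + m * t := by
              have h3 : leeWt (a₀ - b) * μ c ≤ m * t :=
                Nat.mul_le_mul (leeWt_le hm _) hc1
              omega
      refine ⟨w, hwW, le_trans hνw_le h1, ?_⟩
      have hmt : (m + 1) * t = m * t + t := by ring
      omega
    have hfin := ih ν hν0 hνadd hνsmul W hWrank hνdefW ((m + 1) * t) M (by positivity) hνcov
    calc M < (m + 1) * t * (m + 1) ^ j := hfin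
      _ = t * (m + 1) ^ (j + 1) := by ring

end LeeAux

namespace LeeAux

theorem geomAux (m : ℕ) : ∀ k : ℕ, m * (∑ i ∈ Finset.range k, (m + 1) ^ i) + 1 = (m + 1) ^ k := by
  intro k
  induction k with
  | zero => simp
  | succ k ih =>
    rw [Finset.sum_range_succ, pow_succ]
    calc m * ((∑ i ∈ Finset.range k, (m + 1) ^ i) + (m + 1) ^ k) + 1
        = (m * (∑ i ∈ Finset.range k, (m + 1) ^ i) + 1) + m * (m + 1) ^ k := by ring
      _ = (m + 1) ^ k + m * (m + 1) ^ k := by rw [ih]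
      _ = (m + 1) ^ k * (m + 1) := by ring

theorem buildMap (m : ℕ) :
    ∀ (k n : ℕ), k ≤ n → n ≤ ∑ i ∈ Finset.range k, (m + 1) ^ i →
    ∃ u : Fin n → Fin k, Function.Surjective u ∧
      ∀ v ≤ m * n, ∃ a : Fin k → ℕ, (∀ j, a j ≤ m) ∧ ∑ i, a (u i) = v := by
  intro k
  induction k with
  | zero =>
    intro n _ h2
    simp only [Finset.range_zero, Finset.sum_empty, Nat.le_zero] at h2
    subst h2
    refine ⟨fun i => i.elim0, fun j => j.elim0, ?_⟩
    intro v hv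
    simp only [Nat.mul_zero, Nat.le_zero] at hv
    subst hv
    exact ⟨fun j => j.elim0, fun j => j.elim0, by simp⟩
  | succ k ih =>
    intro n hkn hnN
    have hNk_k : k ≤ ∑ i ∈ Finset.range k, (m + 1) ^ i := by
      calc k = ∑ _i ∈ Finset.range k, 1 := by simp
        _ ≤ _ := Finset.sum_le_sum fun i _ => Nat.one_le_pow _ _ (by omega)
    have geom := geomAux m k
    set Nk := ∑ i ∈ Finset.range k, (m + 1) ^ i with hNkdef
    set n' := min (n - 1) Nk with hn'def
    have h1 : k ≤ n' := le_min (by omega) hNk_k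
    have h2 : n' ≤ Nk := min_le_right _ _
    obtain ⟨u', hu'surj, hu'cov⟩ := ih n' h1 h2
    set T := n - n' with hTdef
    have hn'n : n' ≤ n - 1 := min_le_left _ _
    have hT1 : 1 ≤ T := by omega
    have hTb : T ≤ m * n' + 1 := by
      rcases le_or_gt (n - 1) Nk with h | h
      · have : n' = n - 1 := min_eq_left h
        omega
      · have hn' : n' = Nk := min_eq_right (by omega)
        have hsucc : n ≤ Nk + (m + 1) ^ k := by
          rw [Finset.sum_range_succ] at hnN
          omega
        rw [hn']
        omega
    have hn : n' + T = n := by omega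
    set g : Fin (n' + T) → Fin (k + 1) :=
      Fin.addCases (fun i' => (u' i').castSucc) (fun _ => Fin.last k) with hgdef
    set u : Fin n → Fin (k + 1) := fun i => g (Fin.cast hn.symm i) with hudef
    have hcastcast : ∀ p : Fin (n' + T), Fin.cast hn.symm (Fin.cast hn p) = p := by
      intro p; ext; simp
    have husum : ∀ F : Fin (k + 1) → ℕ,
        ∑ i, F (u i) = (∑ i', F ((u' i').castSucc)) + T * F (Fin.last k) := by
      intro F
      have e1 : ∑ i, F (u i) = ∑ p : Fin (n' + T), F (g p) := by
        refine (Fintype.sum_equiv (finCongr hn) _ _ ?_).symm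
        intro p
        simp only [hudef, finCongr_apply, hcastcast]
      rw [e1, Fin.sum_univ_add (f := fun p => F (g p))]
      congr 1
      · refine Finset.sum_congr rfl fun i' _ => ?_
        simp [hgdef]
      · have : ∀ i'' : Fin T, F (g (Fin.natAdd n' i'')) = F (Fin.last k) := by
          intro i''; simp [hgdef]
        rw [Finset.sum_congr rfl fun i'' _ => this i'']
        simp [mul_comm]
    refine ⟨u, ?_, ?_⟩
    · intro j
      refine Fin.lastCases ?_ ?_ j
      · refine ⟨Fin.cast hn (Fin.natAdd n' ⟨0, by omega⟩), ?_⟩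
        simp only [hudef, hcastcast, hgdef]
        rw [Fin.addCases_right]
      · intro j'
        obtain ⟨i', hi'⟩ := hu'surj j'
        refine ⟨Fin.cast hn (Fin.castAdd T i'), ?_⟩
        simp only [hudef, hcastcast, hgdef]
        rw [Fin.addCases_left, hi']
    · intro v hv
      have hvmn : v ≤ m * n' + m * T := by
        have : m * n = m * n' + m * T := by rw [← hn]; ring
        omega
      have hdm := Nat.div_add_mod v T
      have hmod : v % T < T := Nat.mod_lt v (by omega)
      set b := min m (v / T) with hbdef
      have hble : b ≤ m := min_le_left _ _
      have hTbv : T * b ≤ v ∧ v - T * b ≤ m * n' := by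
        rcases le_or_gt m (v / T) with hc | hc
        · have hb : b = m := min_eq_left hc
          have hmTv : m * T ≤ v := (Nat.le_div_iff_mul_le (by omega)).mp hc
          have hcm : T * m = m * T := mul_comm _ _
          constructor
          · rw [hb]; omega
          · rw [hb]; omega
        · have hb : b = v / T := min_eq_right (le_of_lt hc)
          constructor
          · rw [hb]; omega
          · rw [hb]; omega
      obtain ⟨hTbv1, hTbv2⟩ := hTbv
      obtain ⟨a', ha'le, ha'sum⟩ := hu'cov (v - T * b) hTbv2
      set a : Fin (k + 1) → ℕ := Fin.lastCases b a' with hadef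
      have haCS : ∀ j' : Fin k, a j'.castSucc = a' j' := by
        intro j'; simp [hadef]
      have haL : a (Fin.last k) = b := by simp [hadef]
      refine ⟨a, ?_, ?_⟩
      · intro j
        refine Fin.lastCases ?_ ?_ j
        · rw [haL]; exact hble
        · intro j'; rw [haCS]; exact ha'le j'
      · rw [husum a, haL]
        have : ∑ i', a ((u' i').castSucc) = v - T * b := by
          rw [← ha'sum]
          exact Finset.sum_congr rfl fun i' _ => haCS (u' i')
        rw [this]
        omega

end LeeAux

theorem stmt14 (q k n : ℕ) (hq : q.Prime) (hodd : Odd q) (hk : 1 ≤ k) :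
    (∃ C : Submodule (ZMod q) (Fin n → ZMod q),
        Module.finrank (ZMod q) C = k ∧
        leeSet (C : Set (Fin n → ZMod q)) = Set.Icc 1 (n * ((q - 1) / 2))) ↔
      (k ≤ n ∧ n ≤ ∑ i ∈ Finset.range k, ((q + 1) / 2) ^ i) := by
  haveI := Fact.mk hq
  obtain ⟨m, hm⟩ := hodd
  have hm1 : 1 ≤ m := by have := hq.two_le; omega
  have hq12 : (q - 1) / 2 = m := by omega
  have hq22 : (q + 1) / 2 = m + 1 := by omega
  rw [hq12, hq22]
  constructor
  · rintro ⟨C, hrC, hsC⟩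
    constructor
    · have h1 := Submodule.finrank_le C
      rwa [hrC, Module.finrank_fin_fun] at h1
    · have geom := LeeAux.geomAux m k
      have hcov : ∀ v ≤ n * m, ∃ x ∈ C, leeW x ≤ v ∧ v < leeW x + 1 := by
        intro v hv
        rcases Nat.eq_zero_or_pos v with h0 | h0
        · exact ⟨0, C.zero_mem, by rw [LeeAux.leeW_zero hm]; omega⟩
        · have hvmem : v ∈ leeSet (C : Set (Fin n → ZMod q)) := by
            rw [hsC]
            exact ⟨h0, hv⟩
          obtain ⟨c, hcC, hc0, hcw⟩ := hvmem
          exact ⟨c, hcC, by omega⟩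
      have hdef : ∀ x ∈ C, leeW x = 0 → x = 0 := by
        intro x _ hx
        by_contra h
        have := LeeAux.leeW_pos hm h
        omega
      have hkey := LeeAux.key q m n hq hm k leeW (LeeAux.leeW_zero hm)
        (LeeAux.leeW_add_le hm) (LeeAux.leeW_smul_le hm) C (le_of_eq hrC) hdef
        1 (n * m) one_pos hcov
      rw [one_mul, ← geom] at hkey
      have hnm : n * m ≤ m * (∑ i ∈ Finset.range k, (m + 1) ^ i) := by omega
      rw [mul_comm n m] at hnm
      exact Nat.le_of_mul_le_mul_left hnm (by omega)
  · rintro ⟨hkn, hnN⟩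
    obtain ⟨u, husurj, hucov⟩ := LeeAux.buildMap m k n hkn hnN
    set L := LinearMap.funLeft (ZMod q) (ZMod q) u with hL
    have hLapp : ∀ (lam : Fin k → ZMod q) i, L lam i = lam (u i) := fun _ _ => rfl
    refine ⟨LinearMap.range L, ?_, ?_⟩
    · rw [LinearMap.finrank_range_of_inj
        (LinearMap.funLeft_injective_of_surjective _ _ _ husurj)]
      exact Module.finrank_fin_fun (ZMod q)
    · ext v
      simp only [leeSet, Set.mem_setOf_eq, Set.mem_Icc]
      constructor
      · rintro ⟨c, hc, hc0, rfl⟩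
        have hc' : c ∈ LinearMap.range L := hc
        obtain ⟨lam, rfl⟩ := hc'
        have hlam0 : lam ≠ 0 := by rintro rfl; exact hc0 (map_zero L)
        obtain ⟨j, hj⟩ := Function.ne_iff.mp hlam0
        obtain ⟨i, hi⟩ := husurj j
        constructor
        · have h1 : 1 ≤ leeWt (L lam i) := by
            rw [hLapp, hi]
            rcases Nat.eq_zero_or_pos (leeWt (lam j)) with h | h
            · exact absurd (LeeAux.leeWt_eq_zero hm h) hj
            · exact h
          calc 1 ≤ leeWt (L lam i) := h1
            _ ≤ leeW (L lam) := by
                unfold leeW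
                exact Finset.single_le_sum (f := fun i' => leeWt (L lam i'))
                  (fun _ _ => Nat.zero_le _) (Finset.mem_univ i)
        · exact LeeAux.leeW_le hm _
      · rintro ⟨hv1, hv2⟩
        obtain ⟨a, hale, hasum⟩ := hucov v (by rwa [mul_comm n m] at hv2)
        set lam : Fin k → ZMod q := fun j => ((a j : ℕ) : ZMod q) with hlam
        have hwt : ∀ j, leeWt (lam j) = a j := fun j => LeeAux.leeWt_natCast hm (hale j)
        refine ⟨L lam, ⟨lam, rfl⟩, ?_, ?_⟩
        · have hex : ∃ i, a (u i) ≠ 0 := by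
            by_contra hall
            push_neg at hall
            rw [Finset.sum_congr rfl (fun i _ => hall i)] at hasum
            simp at hasum
            omega
          obtain ⟨i, hi⟩ := hex
          intro h0
          have h1 : L lam i = 0 := by rw [h0]; rfl
          rw [hLapp] at h1
          have h2 : leeWt (lam (u i)) = 0 := by rw [h1]; exact LeeAux.leeWt_zero hm
          rw [hwt] at h2
          exact hi h2
        · unfold leeW
          calc ∑ i, leeWt (L lam i) = ∑ i, a (u i) :=
              Finset.sum_congr rfl fun i _ => by rw [hLapp, hwt]
            _ = v := hasum
end

section
/- Let q be a prime, k ≥ 1, and n = Σ_{i=0}^{k−1} q^i = (q^k − 1)/(q − 1). Then there exists a k-dimensional ZMod q-subspace C of (Fin n → ZMod q) whose Manhattan weight set equals {1, 2, …, q^k − 1}; in particular |w_M(C)| = q^k − 1, so L_M(k,q) = q^k − 1 and M(M,k,q) = (q^k − 1)/(q − 1). -/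
/-! Repeat the `i`-th message coordinate `q ^ i` times. A message `a` then has Manhattan weight
`∑ i, (a i).val * q ^ i`, the number with base-`q` digits `(a i).val`; as `a` runs over the
nonzero messages this runs over `1, …, q ^ k - 1`, each value exactly once. -/

/-- The Manhattan weight of a vector over `ZMod q`. -/
def manW {q n : ℕ} (c : Fin n → ZMod q) : ℕ := ∑ i, (c i).val

/-- The Manhattan weight set of a set of vectors. -/
def manSet {q n : ℕ} (C : Set (Fin n → ZMod q)) : Set ℕ :=
  {x | ∃ c ∈ C, c ≠ 0 ∧ manW c = x}

theorem manSet_range_of_injective {q n : ℕ} {M : Type*} [AddCommGroup M] [Module (ZMod q) M]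
    {f : M →ₗ[ZMod q] (Fin n → ZMod q)} (hf : Function.Injective f) :
    manSet (LinearMap.range f : Set (Fin n → ZMod q)) = (fun a => manW (f a)) '' {a | a ≠ 0} := by
  ext x
  simp only [manSet, SetLike.mem_coe, LinearMap.mem_range, Set.mem_ofPred_eq, Set.mem_image]
  constructor
  · rintro ⟨_, ⟨a, rfl⟩, hc, rfl⟩
    exact ⟨a, fun ha => hc (by rw [ha, map_zero]), rfl⟩
  · rintro ⟨a, ha, rfl⟩
    exact ⟨f a, ⟨a, rfl⟩, (map_ne_zero_iff f hf).mpr ha, rfl⟩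

namespace ZMod

variable {q k : ℕ} [NeZero q]

theorem val_finEquiv_symm (x : ZMod q) : ((finEquiv q).symm x : ℕ) = x.val := by
  obtain ⟨p, rfl⟩ := Nat.exists_eq_succ_of_ne_zero (NeZero.ne q)
  rfl

variable (q k) in
def digitsEquiv : (Fin k → ZMod q) ≃ Fin (q ^ k) :=
  (Equiv.piCongrRight fun _ => (finEquiv q).symm.toEquiv).trans finFunctionFinEquiv

theorem digitsEquiv_val (a : Fin k → ZMod q) :
    (digitsEquiv q k a : ℕ) = ∑ i, (a i).val * q ^ (i : ℕ) := by
  simp [digitsEquiv, val_finEquiv_symm]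

theorem sum_val_mul_pow_eq_zero_iff (a : Fin k → ZMod q) :
    ∑ i, (a i).val * q ^ (i : ℕ) = 0 ↔ a = 0 := by
  simp [Finset.sum_eq_zero_iff, NeZero.ne q, funext_iff]

theorem image_sum_val_mul_pow :
    (fun a : Fin k → ZMod q => ∑ i, (a i).val * q ^ (i : ℕ)) '' {a | a ≠ 0} =
      Set.Icc 1 (q ^ k - 1) := by
  ext x
  simp only [Set.mem_image, Set.mem_ofPred_eq, Set.mem_Icc]
  constructor
  · rintro ⟨a, ha, rfl⟩
    have hlt := (digitsEquiv q k a).isLt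
    rw [digitsEquiv_val] at hlt
    have hne := (sum_val_mul_pow_eq_zero_iff a).not.mpr ha
    omega
  · rintro ⟨hx1, hx⟩
    have hval : (digitsEquiv q k ((digitsEquiv q k).symm ⟨x, by omega⟩) : ℕ) = x := by
      rw [Equiv.apply_symm_apply]
    rw [digitsEquiv_val] at hval
    refine ⟨_, fun h => ?_, hval⟩
    rw [← sum_val_mul_pow_eq_zero_iff, hval] at h
    omega

end ZMod

section Repetition

variable {q k n : ℕ} (m : Fin k → ℕ) (e : (Σ i, Fin (m i)) ≃ Fin n)

/-- The code repeating message coordinate `i` at the `m i` positions `e ⟨i, _⟩`. -/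
def repetitionMap : (Fin k → ZMod q) →ₗ[ZMod q] (Fin n → ZMod q) :=
  LinearMap.funLeft (ZMod q) (ZMod q) (Sigma.fst ∘ e.symm)

theorem manW_repetitionMap (a : Fin k → ZMod q) :
    manW (repetitionMap m e a) = ∑ i, m i * (a i).val := by
  rw [manW, ← e.sum_comp, ← Finset.univ_sigma_univ, Finset.sum_sigma]
  simp [repetitionMap, LinearMap.funLeft]

theorem repetitionMap_injective (hm : ∀ i, 0 < m i) :
    Function.Injective (repetitionMap (q := q) m e) :=
  LinearMap.funLeft_injective_of_surjective _ _ _ <|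
    Function.Surjective.comp (fun i => ⟨⟨i, ⟨0, hm i⟩⟩, rfl⟩) e.symm.surjective

end Repetition

theorem stmt17_general (q k n : ℕ) (hq : q.Prime)
    (hn : n = ∑ i ∈ Finset.range k, q ^ i) :
    ∃ C : Submodule (ZMod q) (Fin n → ZMod q),
      Module.finrank (ZMod q) C = k ∧
      manSet (C : Set (Fin n → ZMod q)) = Set.Icc 1 (q ^ k - 1) := by
  have := Fact.mk hq
  let e : (Σ i : Fin k, Fin (q ^ (i : ℕ))) ≃ Fin n :=
    Fintype.equivOfCardEq (by simp [Fintype.card_sigma, Fin.sum_univ_eq_sum_range, hn])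
  have hinj := repetitionMap_injective (q := q) _ e fun i => pow_pos hq.pos _
  refine ⟨LinearMap.range (repetitionMap _ e), ?_, ?_⟩
  · rw [LinearMap.finrank_range_of_inj hinj, Module.finrank_fin_fun]
  · simp_rw [manSet_range_of_injective hinj, manW_repetitionMap, mul_comm (q ^ _)]
    exact ZMod.image_sum_val_mul_pow

theorem stmt17 (q k n : ℕ) (hq : q.Prime) (hk : 1 ≤ k)
    (hn : n = ∑ i ∈ Finset.range k, q ^ i) :
    ∃ C : Submodule (ZMod q) (Fin n → ZMod q),
      Module.finrank (ZMod q) C = k ∧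
      manSet (C : Set (Fin n → ZMod q)) = Set.Icc 1 (q ^ k - 1) :=
  stmt17_general q k n hq hn
end

section
/- Let q be a prime and k ≥ 1. There exists a k-dimensional ZMod q-subspace C of (Fin n → ZMod q) whose Manhattan weight set equals {1, 2, …, n·(q − 1)} (a Manhattan-FWS code) if and only if k ≤ n ≤ Σ_{i=0}^{k−1} q^i. -/
private lemma geomNat (q : ℕ) (hq : 1 ≤ q) (j : ℕ) :
    (q - 1) * ∑ i ∈ Finset.range j, q ^ i + 1 = q ^ j := by
  obtain ⟨r, rfl⟩ : ∃ r, q = r + 1 := ⟨q - 1, by omega⟩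
  simp only [Nat.add_sub_cancel]
  induction j with
  | zero => simp
  | succ j ih =>
    rw [Finset.sum_range_succ, pow_succ]
    calc r * (∑ i ∈ Finset.range j, (r+1) ^ i + (r+1)^j) + 1
        = (r * ∑ i ∈ Finset.range j, (r+1) ^ i + 1) + r * (r+1)^j := by ring
      _ = (r+1)^j + r * (r+1)^j := by rw [ih]
      _ = (r+1)^j * (r+1) := by ring

/-- Partial sums of the block sizes. -/
private def Sfun (q k n j : ℕ) : ℕ := min (∑ i ∈ Finset.range j, q ^ i) (n - k + j)

private lemma S_zero (q k n : ℕ) : Sfun q k n 0 = 0 := by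
  simp [Sfun]

private lemma S_top (q k n : ℕ) (hkn : k ≤ n)
    (hnG : n ≤ ∑ i ∈ Finset.range k, q ^ i) : Sfun q k n k = n := by
  unfold Sfun
  have : n - k + k = n := by omega
  rw [this, Nat.min_eq_right hnG]

private lemma S_step (q k n j : ℕ) (hq : 1 ≤ q) :
    Sfun q k n j + 1 ≤ Sfun q k n (j + 1) := by
  unfold Sfun
  rw [Finset.sum_range_succ]
  have : 1 ≤ q ^ j := Nat.one_le_pow _ _ (by omega)
  omega

private lemma S_mono (q k n : ℕ) (hq : 1 ≤ q) : StrictMono (Sfun q k n) :=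
  strictMono_nat_of_lt_succ fun j => by have := S_step q k n j hq; omega

private lemma b_le (q k n j : ℕ) (hq : 1 ≤ q) :
    Sfun q k n (j + 1) - Sfun q k n j ≤ 1 + (q - 1) * Sfun q k n j := by
  have hgeom := geomNat q hq j
  have h1 : Sfun q k n (j+1) ≤ (∑ i ∈ Finset.range j, q ^ i) + q ^ j := by
    unfold Sfun; rw [Finset.sum_range_succ]; exact min_le_left _ _
  have h2 : Sfun q k n (j+1) ≤ n - k + j + 1 := by
    unfold Sfun
    have : n - k + (j + 1) = n - k + j + 1 := by omega
    rw [this]; exact min_le_right _ _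
  rcases le_or_gt (∑ i ∈ Finset.range j, q ^ i) (n - k + j) with h | h
  · have hS : Sfun q k n j = ∑ i ∈ Finset.range j, q ^ i := min_eq_left h
    rw [hS]; omega
  · have hS : Sfun q k n j = n - k + j := min_eq_right h.le
    rw [hS]; omega

/-- Greedy representation lemma. -/
private lemma reprLem (q k n : ℕ) (hq : 2 ≤ q) :
    ∀ j t, t ≤ (q - 1) * Sfun q k n j →
      ∃ a : ℕ → ℕ, (∀ i, a i ≤ q - 1) ∧
        ∑ i ∈ Finset.range j, (Sfun q k n (i + 1) - Sfun q k n i) * a i = t := by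
  intro j
  induction j with
  | zero =>
    intro t ht
    rw [S_zero q k n, Nat.mul_zero, Nat.le_zero] at ht
    subst ht
    exact ⟨fun _ => 0, fun i => Nat.zero_le _, by simp⟩
  | succ j ih =>
    intro t ht
    have hstep := S_step q k n j (by omega)
    have hb1 : 1 ≤ Sfun q k n (j + 1) - Sfun q k n j := by omega
    set b := Sfun q k n (j + 1) - Sfun q k n j with hb
    set aj := min (q - 1) (t / b) with haj
    have hkey : t - aj * b ≤ (q - 1) * Sfun q k n j := by
      rcases le_or_gt (q - 1) (t / b) with h | h
      · have haj' : aj = q - 1 := min_eq_left h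
        have hmul : (q - 1) * Sfun q k n (j + 1)
            = (q - 1) * Sfun q k n j + (q - 1) * b := by
          rw [← Nat.mul_add]; congr 1; omega
        rw [haj']
        omega
      · have haj' : aj = t / b := min_eq_right h.le
        have hdm := Nat.div_add_mod t b
        have hmod : t % b < b := Nat.mod_lt _ (by omega)
        have hble := b_le q k n j (by omega)
        have hcomm : t / b * b = b * (t / b) := Nat.mul_comm _ _
        rw [haj']
        omega
    have hajle : aj * b ≤ t := by
      calc aj * b ≤ t / b * b := Nat.mul_le_mul_right _ (min_le_right _ _)
        _ ≤ t := Nat.div_mul_le_self _ _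
    obtain ⟨a', ha'1, ha'2⟩ := ih (t - aj * b) hkey
    refine ⟨Function.update a' j aj, ?_, ?_⟩
    · intro i
      rcases eq_or_ne i j with rfl | hne
      · rw [Function.update_self]; exact min_le_left _ _
      · rw [Function.update_of_ne hne]; exact ha'1 i
    · rw [Finset.sum_range_succ, Function.update_self]
      have hcongr : ∀ i ∈ Finset.range j,
          (Sfun q k n (i + 1) - Sfun q k n i) * Function.update a' j aj i
            = (Sfun q k n (i + 1) - Sfun q k n i) * a' i := by
        intro i hi
        rw [Function.update_of_ne (Finset.mem_range.mp hi).ne]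
      rw [Finset.sum_congr rfl hcongr, ha'2, ← hb]
      have hcomm : b * aj = aj * b := Nat.mul_comm _ _
      omega

/-- The index of the block containing coordinate `i`. -/
private def idxf (q k n i : ℕ) : ℕ :=
  ((Finset.range k).filter (fun j => Sfun q k n (j + 1) ≤ i)).card

private lemma idx_eq (q k n : ℕ) (hq : 1 ≤ q) {j i : ℕ} (hj : j < k)
    (h1 : Sfun q k n j ≤ i) (h2 : i < Sfun q k n (j + 1)) : idxf q k n i = j := by
  have hsm := S_mono q k n hq
  have hfilter : (Finset.range k).filter (fun l => Sfun q k n (l + 1) ≤ i)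
      = Finset.range j := by
    ext l
    simp only [Finset.mem_filter, Finset.mem_range]
    constructor
    · rintro ⟨hlk, hle⟩
      have hlt : Sfun q k n (l + 1) < Sfun q k n (j + 1) := lt_of_le_of_lt hle h2
      have := hsm.lt_iff_lt.mp hlt
      omega
    · intro hlj
      exact ⟨by omega, le_trans (hsm.monotone (by omega : l + 1 ≤ j)) h1⟩
  rw [idxf, hfilter, Finset.card_range]

private lemma idx_lt (q k n : ℕ) (hq : 1 ≤ q) (hk : 1 ≤ k) (hkn : k ≤ n)
    (hnG : n ≤ ∑ i ∈ Finset.range k, q ^ i) {i : ℕ} (hi : i < n) : idxf q k n i < k := by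
  have hsm := S_mono q k n hq
  have hsub : (Finset.range k).filter (fun j => Sfun q k n (j + 1) ≤ i)
      ⊆ Finset.range (k - 1) := by
    intro l hl
    simp only [Finset.mem_filter, Finset.mem_range] at hl ⊢
    obtain ⟨hlk, hle⟩ := hl
    have hlt : Sfun q k n (l + 1) < Sfun q k n k := by
      rw [S_top q k n hkn hnG]; omega
    have := hsm.lt_iff_lt.mp hlt
    omega
  have := Finset.card_le_card hsub
  rw [Finset.card_range] at this
  unfold idxf
  omega

/-- Summing a function of the block index over all coordinates. -/
private lemma sum_key (q k n : ℕ) (hq : 1 ≤ q) (f : ℕ → ℕ) :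
    ∀ m, m ≤ k → ∑ i ∈ Finset.range (Sfun q k n m), f (idxf q k n i)
      = ∑ j ∈ Finset.range m, (Sfun q k n (j + 1) - Sfun q k n j) * f j := by
  intro m
  induction m with
  | zero => intro _; rw [S_zero q k n]; simp
  | succ m ih =>
    intro hm
    have hsm := S_mono q k n hq
    have h1 : Sfun q k n m ≤ Sfun q k n (m + 1) := (hsm (Nat.lt_succ_self m)).le
    rw [Finset.range_eq_Ico,
      ← Finset.sum_Ico_consecutive _ (Nat.zero_le (Sfun q k n m)) h1,
      ← Finset.range_eq_Ico, ih (by omega), Finset.sum_range_succ]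
    congr 1
    have hcongr : ∀ i ∈ Finset.Ico (Sfun q k n m) (Sfun q k n (m + 1)),
        f (idxf q k n i) = f m := by
      intro i hi
      rw [Finset.mem_Ico] at hi
      rw [idx_eq q k n hq (by omega) hi.1 hi.2]
    rw [Finset.sum_congr rfl hcongr, Finset.sum_const, Nat.card_Ico, smul_eq_mul]

theorem stmt18 (q k n : ℕ) (hq : q.Prime) (hk : 1 ≤ k) :
    (∃ C : Submodule (ZMod q) (Fin n → ZMod q),
        Module.finrank (ZMod q) C = k ∧
        manSet (C : Set (Fin n → ZMod q)) = Set.Icc 1 (n * (q - 1))) ↔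
      (k ≤ n ∧ n ≤ ∑ i ∈ Finset.range k, q ^ i) := by
  haveI := Fact.mk hq
  have hq2 : 2 ≤ q := hq.two_le
  constructor
  · rintro ⟨C, hrank, hset⟩
    have hkn : k ≤ n := by
      rw [← hrank]
      calc Module.finrank (ZMod q) C ≤ Module.finrank (ZMod q) (Fin n → ZMod q) :=
            Submodule.finrank_le C
        _ = n := Module.finrank_fin_fun (ZMod q)
    refine ⟨hkn, ?_⟩
    haveI : Fintype C := Fintype.ofFinite C
    have hcard : Fintype.card C = q ^ k := by
      rw [Module.card_eq_pow_finrank (K := ZMod q) (V := C), ZMod.card, hrank]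
    have hNat : Nat.card C = q ^ k := by
      rw [Nat.card_eq_fintype_card, hcard]
    have hCcard : (C : Set (Fin n → ZMod q)).ncard = q ^ k := by
      rw [← Nat.card_coe_set_eq]; exact hNat
    have himg : manSet (C : Set (Fin n → ZMod q))
        = manW '' ((C : Set (Fin n → ZMod q)) \ {0}) := by
      ext x
      simp only [manSet, Set.mem_setOf_eq, Set.mem_image, Set.mem_diff,
        Set.mem_singleton_iff]
      constructor
      · rintro ⟨c, hc, hc0, rfl⟩; exact ⟨c, ⟨hc, hc0⟩, rfl⟩
      · rintro ⟨c, ⟨hc, hc0⟩, rfl⟩; exact ⟨c, hc, hc0, rfl⟩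
    have hIcc : (Set.Icc 1 (n * (q - 1))).ncard = n * (q - 1) := by
      rw [← Finset.coe_Icc, Set.ncard_coe_finset, Nat.card_Icc]
      omega
    have hfin : ((C : Set (Fin n → ZMod q)) \ {0}).Finite := Set.toFinite _
    have hle1 : (manSet (C : Set (Fin n → ZMod q))).ncard
        ≤ ((C : Set (Fin n → ZMod q)) \ {0}).ncard := by
      rw [himg]; exact Set.ncard_image_le hfin
    have hdiff : ((C : Set (Fin n → ZMod q)) \ {0}).ncard
        = (C : Set (Fin n → ZMod q)).ncard - 1 :=
      Set.ncard_diff_singleton_of_mem C.zero_mem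
    have hbound : n * (q - 1) ≤ q ^ k - 1 := by
      rw [← hIcc, ← hset]
      omega
    have hgeom := geomNat q (by omega) k
    have hmul : n * (q - 1) ≤ (q - 1) * ∑ i ∈ Finset.range k, q ^ i := by omega
    rw [Nat.mul_comm] at hmul
    exact Nat.le_of_mul_le_mul_left hmul (by omega)
  · rintro ⟨hkn, hnG⟩
    have hq1 : 1 ≤ q := by omega
    have hsm := S_mono q k n hq1
    have hlt : ∀ i : Fin n, idxf q k n i.val < k :=
      fun i => idx_lt q k n hq1 hk hkn hnG i.isLt
    let π : Fin n → Fin k := fun i => ⟨idxf q k n i.val, hlt i⟩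
    have hπsurj : Function.Surjective π := by
      intro j
      have hjn : Sfun q k n j.val < n := by
        have h := hsm j.isLt
        rwa [S_top q k n hkn hnG] at h
      refine ⟨⟨Sfun q k n j.val, hjn⟩, ?_⟩
      apply Fin.ext
      exact idx_eq q k n hq1 j.isLt le_rfl (hsm (Nat.lt_succ_self _))
    refine ⟨LinearMap.range (LinearMap.funLeft (ZMod q) (ZMod q) π), ?_, ?_⟩
    · rw [LinearMap.finrank_range_of_inj
        (LinearMap.funLeft_injective_of_surjective _ _ _ hπsurj)]
      exact Module.finrank_fin_fun (ZMod q)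
    · ext t
      simp only [manSet, Set.mem_setOf_eq, Set.mem_Icc, SetLike.mem_coe,
        LinearMap.mem_range]
      constructor
      · rintro ⟨c, _, hc0, rfl⟩
        constructor
        · obtain ⟨i, hi⟩ := Function.ne_iff.mp hc0
          have hvi : (c i).val ≠ 0 := fun h => hi (by rwa [ZMod.val_eq_zero] at h)
          have hsing : (c i).val ≤ manW c :=
            Finset.single_le_sum (f := fun i => (c i).val)
              (fun _ _ => Nat.zero_le _) (Finset.mem_univ i)
          omega
        · calc manW c ≤ Finset.univ.card • (q - 1) :=
                Finset.sum_le_card_nsmul _ _ _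
                  (fun i _ => by have := ZMod.val_lt (c i); omega)
            _ = n * (q - 1) := by
                simp [Finset.card_univ]
      · rintro ⟨ht1, ht2⟩
        have ht' : t ≤ (q - 1) * Sfun q k n k := by
          rw [S_top q k n hkn hnG, Nat.mul_comm]; exact ht2
        obtain ⟨a, ha1, ha2⟩ := reprLem q k n hq2 k t ht'
        have hw : manW (fun i : Fin n => (a (idxf q k n i.val) : ZMod q)) = t := by
          have hs1 : manW (fun i : Fin n => (a (idxf q k n i.val) : ZMod q))
              = ∑ i ∈ Finset.range n, ((a (idxf q k n i) : ZMod q)).val :=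
            Fin.sum_univ_eq_sum_range (fun m => ((a (idxf q k n m) : ZMod q)).val) n
          rw [hs1]
          have hcongr : ∀ i ∈ Finset.range n,
              ((a (idxf q k n i) : ZMod q)).val = a (idxf q k n i) := fun i _ =>
            ZMod.val_cast_of_lt (by have := ha1 (idxf q k n i); omega)
          rw [Finset.sum_congr rfl hcongr]
          have hrange : Finset.range n = Finset.range (Sfun q k n k) := by
            rw [S_top q k n hkn hnG]
          rw [hrange, sum_key q k n hq1 a k le_rfl]
          exact ha2
        refine ⟨fun i => (a (idxf q k n i.val) : ZMod q),
          ⟨fun j => (a j.val : ZMod q), rfl⟩, ?_, hw⟩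
        intro h
        rw [h] at hw
        simp [manW] at hw
        omega
end
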